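/- arXiv:2407.07072 — 14 statements merged into one kernel-verified Lean document; each statement's English description precedes it below -/
import Mathlib

section
/- For each a ∈ {0,1}, the average natural indirect effect decomposes over the principal strata: δ(a) = E[(Y a 1 − Y a 0)·1{M₁ = 1, M₀ = 0}] − E[(Y a 1 − Y a 0)·1{M₁ = 0, M₀ = 1}]; that is, only mechanism compliers and mechanism defiers contribute to the ANIE, the compliers positively and the defiers negatively. -/
open MeasureTheory

/-- Average treatment effect on the mediator (ATM): `α = E[M₁ − M₀]`. -/
noncomputable def atm {Ω : Type*} [MeasurableSpace Ω] (P : Measure Ω)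
    (M : Fin 2 → Ω → Fin 2) : ℝ :=
  ∫ ω, (((M 1 ω : ℕ) : ℝ) - ((M 0 ω : ℕ) : ℝ)) ∂P

/-- Average natural indirect effect (ANIE) at treatment level `a`:
`δ(a) = E[Y(a, M₁) − Y(a, M₀)]`. -/
noncomputable def anie {Ω : Type*} [MeasurableSpace Ω] (P : Measure Ω)
    (M : Fin 2 → Ω → Fin 2) (Y : Fin 2 → Fin 2 → Ω → Fin 2) (a : Fin 2) : ℝ :=
  ∫ ω, (((Y a (M 1 ω) ω : ℕ) : ℝ) - ((Y a (M 0 ω) ω : ℕ) : ℝ)) ∂P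

/-- Observable probabilities: `p_{ym·a} = P(Y(a, M_a) = y ∧ M_a = m)`. -/
noncomputable def pobs {Ω : Type*} [MeasurableSpace Ω] (P : Measure Ω)
    (M : Fin 2 → Ω → Fin 2) (Y : Fin 2 → Fin 2 → Ω → Fin 2) (y m a : Fin 2) : ℝ :=
  (P {ω | Y a (M a ω) ω = y ∧ M a ω = m}).toReal

/-- The ANIE decomposes over the principal strata: only mechanism compliers and
mechanism defiers contribute, the compliers positively and the defiers negatively. -/
theorem anie_strata_decomposition
    {Ω : Type*} [MeasurableSpace Ω] (P : Measure Ω) [IsProbabilityMeasure P]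
    (M : Fin 2 → Ω → Fin 2) (Y : Fin 2 → Fin 2 → Ω → Fin 2)
    (hM : ∀ b, Measurable (M b)) (hY : ∀ a m, Measurable (Y a m)) :
    ∀ a : Fin 2, anie P M Y a =
      (∫ ω in {ω | M 1 ω = 1 ∧ M 0 ω = 0},
        (((Y a 1 ω : ℕ) : ℝ) - ((Y a 0 ω : ℕ) : ℝ)) ∂P)
      - (∫ ω in {ω | M 1 ω = 0 ∧ M 0 ω = 1},
        (((Y a 1 ω : ℕ) : ℝ) - ((Y a 0 ω : ℕ) : ℝ)) ∂P) := by

  intro a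
  classical
  set h : Ω → ℝ := fun ω => (((Y a 1 ω : ℕ) : ℝ) - ((Y a 0 ω : ℕ) : ℝ)) with hh
  set S : Set Ω := {ω | M 1 ω = 1 ∧ M 0 ω = 0} with hS
  set T : Set Ω := {ω | M 1 ω = 0 ∧ M 0 ω = 1} with hT
  have hSm : MeasurableSet S := by
    have : S = (M 1) ⁻¹' {1} ∩ (M 0) ⁻¹' {0} := rfl
    rw [this]
    exact ((hM 1) (measurableSet_singleton 1)).inter ((hM 0) (measurableSet_singleton 0))
  have hTm : MeasurableSet T := by
    have : T = (M 1) ⁻¹' {0} ∩ (M 0) ⁻¹' {1} := rfl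
    rw [this]
    exact ((hM 1) (measurableSet_singleton 0)).inter ((hM 0) (measurableSet_singleton 1))
  have hYint : ∀ m : Fin 2, Integrable (fun ω => ((Y a m ω : ℕ) : ℝ)) P := by
    intro m
    refine (integrable_const (1 : ℝ)).mono' ?_ (Filter.Eventually.of_forall fun ω => ?_)
    · exact Measurable.aestronglyMeasurable
        ((measurable_from_top (f := fun x : Fin 2 => ((x : ℕ) : ℝ))).comp (hY a m))
    · have : (Y a m ω : ℕ) ≤ 1 := Nat.lt_succ_iff.mp (Y a m ω).isLt
      simp only [Real.norm_eq_abs, abs_of_nonneg (by positivity : (0:ℝ) ≤ ((Y a m ω : ℕ):ℝ))]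
      exact_mod_cast this
  have hhint : Integrable h P := (hYint 1).sub (hYint 0)
  have key : ∀ ω, (((Y a (M 1 ω) ω : ℕ) : ℝ) - ((Y a (M 0 ω) ω : ℕ) : ℝ))
      = S.indicator h ω - T.indicator h ω := by
    intro ω
    have htwo : ∀ x : Fin 2, x = 0 ∨ x = 1 := by decide
    rcases htwo (M 1 ω) with h1 | h1 <;>
      rcases htwo (M 0 ω) with h0 | h0 <;>
      simp [hS, hT, hh, h1, h0, Set.indicator_apply, Set.mem_setOf_eq]
  have : anie P M Y a = ∫ ω, (S.indicator h ω - T.indicator h ω) ∂P := by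
    unfold anie
    exact integral_congr_ae (Filter.Eventually.of_forall key)
  rw [this, integral_sub (hhint.indicator hSm) (hhint.indicator hTm),
    integral_indicator hSm, integral_indicator hTm]
end

section
/- Under the monotonic mediator response assumption, for each a ∈ {0,1} the average natural indirect effect reduces to the complier stratum alone: δ(a) = E[(Y a 1 − Y a 0)·1{M₁ = 1, M₀ = 0}]. -/
open MeasureTheory

/-- Under monotonic mediator response (`M₁ ≥ M₀` a.s.), the ANIE reduces to the
complier stratum alone: `δ(a) = E[(Y a 1 − Y a 0)·1{M₁ = 1, M₀ = 0}]`. -/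
theorem anie_eq_complier_term_of_mmr
    {Ω : Type*} [MeasurableSpace Ω] (P : Measure Ω) [IsProbabilityMeasure P]
    (M : Fin 2 → Ω → Fin 2) (Y : Fin 2 → Fin 2 → Ω → Fin 2)
    (hM : ∀ b, Measurable (M b)) (hY : ∀ a m, Measurable (Y a m))
    (hMMR : ∀ᵐ ω ∂P, M 0 ω ≤ M 1 ω) :
    ∀ a : Fin 2, anie P M Y a =
      ∫ ω in {ω | M 1 ω = 1 ∧ M 0 ω = 0},
        (((Y a 1 ω : ℕ) : ℝ) - ((Y a 0 ω : ℕ) : ℝ)) ∂P := by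
  intro a
  have hS : MeasurableSet {ω | M 1 ω = 1 ∧ M 0 ω = 0} :=
    ((hM 1) (measurableSet_singleton 1)).inter ((hM 0) (measurableSet_singleton 0))
  rw [anie, ← integral_indicator hS]
  apply integral_congr_ae
  filter_upwards [hMMR] with ω h
  by_cases h1 : M 1 ω = 1 ∧ M 0 ω = 0
  · simp only [Set.indicator_apply, Set.mem_setOf_eq, if_pos h1]
    rw [h1.1, h1.2]
  · simp only [Set.indicator_apply, Set.mem_setOf_eq, if_neg h1]
    have heq : M 1 ω = M 0 ω := by
      have h' : (M 0 ω).val ≤ (M 1 ω).val := h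
      have a1 := (M 1 ω).isLt
      have a0 := (M 0 ω).isLt
      have : ¬((M 1 ω).val = 1 ∧ (M 0 ω).val = 0) := by
        intro ⟨x, y⟩; exact h1 ⟨Fin.ext x, Fin.ext y⟩
      exact Fin.ext (by omega)
    rw [heq]; ring
end

section
/- Under the monotonic mediator response assumption, if P(M₁ = 1, M₀ = 0) > 0 then the average natural indirect effect obeys the product rule: for each a ∈ {0,1}, δ(a) = E[Y a 1 − Y a 0 | M₁ = 1, M₀ = 0] · α, i.e., the ANIE is the controlled direct effect of the mediator among mechanism compliers multiplied by the ATM. -/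
open MeasureTheory

/-- Under monotonic mediator response, if `P(M₁ = 1, M₀ = 0) > 0`, the ANIE obeys
the product rule: `δ(a) = E[Y a 1 − Y a 0 | M₁ = 1, M₀ = 0] · α`, where the
conditional expectation is the expectation under the conditional measure. -/
theorem anie_product_rule_of_mmr
    {Ω : Type*} [MeasurableSpace Ω] (P : Measure Ω) [IsProbabilityMeasure P]
    (M : Fin 2 → Ω → Fin 2) (Y : Fin 2 → Fin 2 → Ω → Fin 2)
    (hM : ∀ b, Measurable (M b)) (hY : ∀ a m, Measurable (Y a m))
    (hMMR : ∀ᵐ ω ∂P, M 0 ω ≤ M 1 ω)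
    (hpos : 0 < P {ω | M 1 ω = 1 ∧ M 0 ω = 0}) :
    ∀ a : Fin 2, anie P M Y a =
      (∫ ω, (((Y a 1 ω : ℕ) : ℝ) - ((Y a 0 ω : ℕ) : ℝ))
          ∂(ProbabilityTheory.cond P {ω | M 1 ω = 1 ∧ M 0 ω = 0})) * atm P M := by
  intro a
  set S : Set Ω := {ω | M 1 ω = 1 ∧ M 0 ω = 0} with hSdef
  have hSm : MeasurableSet S :=
    ((hM 1) (measurableSet_singleton 1)).inter ((hM 0) (measurableSet_singleton 0))
  have hfe : (fun ω => ((Y a (M 1 ω) ω : ℕ) : ℝ) - ((Y a (M 0 ω) ω : ℕ) : ℝ))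
      =ᵐ[P] S.indicator (fun ω => ((Y a 1 ω : ℕ) : ℝ) - ((Y a 0 ω : ℕ) : ℝ)) := by
    filter_upwards [hMMR] with ω hle
    have h0 : M 0 ω = 0 ∨ M 0 ω = 1 := by omega
    have h1 : M 1 ω = 0 ∨ M 1 ω = 1 := by omega
    have hmem : ω ∈ S ↔ (M 1 ω = 1 ∧ M 0 ω = 0) := Iff.rfl
    rcases h0 with h0 | h0 <;> rcases h1 with h1 | h1 <;>
      simp [Set.indicator, hmem, h0, h1] at hle ⊢ <;> omega
  have hge : (fun ω => ((M 1 ω : ℕ) : ℝ) - ((M 0 ω : ℕ) : ℝ))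
      =ᵐ[P] S.indicator (fun _ => (1 : ℝ)) := by
    filter_upwards [hMMR] with ω hle
    have h0 : M 0 ω = 0 ∨ M 0 ω = 1 := by omega
    have h1 : M 1 ω = 0 ∨ M 1 ω = 1 := by omega
    have hmem : ω ∈ S ↔ (M 1 ω = 1 ∧ M 0 ω = 0) := Iff.rfl
    rcases h0 with h0 | h0 <;> rcases h1 with h1 | h1 <;>
      simp [Set.indicator, hmem, h0, h1] at hle ⊢ <;> omega
  have hP0 : (P S).toReal ≠ 0 := by
    have := hpos.ne'
    simp [ENNReal.toReal_ne_zero, this, measure_ne_top]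
  rw [anie, atm, integral_congr_ae hfe, integral_congr_ae hge,
    integral_indicator hSm, integral_indicator hSm, ProbabilityTheory.cond,
    integral_smul_measure]
  simp only [integral_const, smul_eq_mul, Measure.real, Measure.restrict_apply MeasurableSet.univ,
    Set.univ_inter, ENNReal.toReal_inv]
  field_simp
end

section
/- Under the monotonic mediator response assumption, a zero average treatment effect on the mediator rules out any average natural indirect effect: if α = 0 then δ(0) = 0 and δ(1) = 0. -/
open MeasureTheory

/-- Under monotonic mediator response, a zero ATM rules out any average natural
indirect effect: if `α = 0` then `δ(0) = 0` and `δ(1) = 0`. -/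
theorem anie_eq_zero_of_atm_eq_zero_of_mmr
    {Ω : Type*} [MeasurableSpace Ω] (P : Measure Ω) [IsProbabilityMeasure P]
    (M : Fin 2 → Ω → Fin 2) (Y : Fin 2 → Fin 2 → Ω → Fin 2)
    (hM : ∀ b, Measurable (M b)) (hY : ∀ a m, Measurable (Y a m))
    (hMMR : ∀ᵐ ω ∂P, M 0 ω ≤ M 1 ω)
    (hatm : atm P M = 0) :
    anie P M Y 0 = 0 ∧ anie P M Y 1 = 0 := by
  set f : Ω → ℝ := fun ω => (((M 1 ω : ℕ) : ℝ) - ((M 0 ω : ℕ) : ℝ)) with hf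
  have hmb : ∀ b, Measurable fun ω => ((M b ω : ℕ) : ℝ) := fun b =>
    (measurable_from_top (f := fun n : Fin 2 => ((n : ℕ) : ℝ))).comp (hM b)
  have hmeas : Measurable f := (hmb 1).sub (hmb 0)
  have hnonneg : 0 ≤ᵐ[P] f := by
    filter_upwards [hMMR] with ω hω
    have hv : (M 0 ω : ℕ) ≤ (M 1 ω : ℕ) := hω
    simp only [f]
    have : ((M 0 ω : ℕ) : ℝ) ≤ ((M 1 ω : ℕ) : ℝ) := by exact_mod_cast hv
    simpa [sub_nonneg] using this
  have hint : Integrable f P := by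
    apply (integrable_const (2 : ℝ)).mono' hmeas.aestronglyMeasurable
    filter_upwards with ω
    have h1 : ((M 1 ω : ℕ) : ℝ) ≤ 1 := by
      have := (M 1 ω).isLt; exact_mod_cast Nat.lt_succ_iff.mp this
    have h0 : (0:ℝ) ≤ ((M 0 ω : ℕ) : ℝ) := by positivity
    have h1' : ((M 0 ω : ℕ) : ℝ) ≤ 1 := by
      have := (M 0 ω).isLt; exact_mod_cast Nat.lt_succ_iff.mp this
    have h0' : (0:ℝ) ≤ ((M 1 ω : ℕ) : ℝ) := by positivity
    rw [Real.norm_eq_abs, abs_le]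
    constructor <;> simp only [f] <;> linarith
  have hzero : f =ᵐ[P] 0 := by
    exact (integral_eq_zero_iff_of_nonneg_ae hnonneg hint).mp hatm
  have hMeq : ∀ᵐ ω ∂P, M 1 ω = M 0 ω := by
    filter_upwards [hzero] with ω hω
    have : ((M 1 ω : ℕ) : ℝ) = ((M 0 ω : ℕ) : ℝ) := by
      have := sub_eq_zero.mp hω; linarith [this]
    have : (M 1 ω : ℕ) = (M 0 ω : ℕ) := by exact_mod_cast this
    exact Fin.ext this
  have key : ∀ a : Fin 2, anie P M Y a = 0 := by
    intro a
    rw [anie]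
    rw [integral_congr_ae (g := fun _ => (0:ℝ))]
    · simp
    · filter_upwards [hMeq] with ω hω
      rw [hω]; ring
  exact ⟨key 0, key 1⟩
end

section
/- Under the monotonic mediator response assumption, the ATM is nonnegative and bounds the magnitude of the average natural indirect effect: α ≥ 0 and |δ(a)| ≤ α for each a ∈ {0,1} (so small ATMs imply small indirect effects). -/
open MeasureTheory

lemma nat_abs_key (m0 m1 y0 y1 : ℕ) (hy0 : y0 ≤ 1) (hy1 : y1 ≤ 1)
    (h : m0 ≤ m1) (he : m0 = m1 → y0 = y1) :
    |((y1 : ℝ)) - (y0 : ℝ)| ≤ (m1 : ℝ) - (m0 : ℝ) := by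
  rcases eq_or_lt_of_le h with heq | hlt
  · subst heq; rw [he rfl]; simp
  · rw [abs_le]; constructor
    · have : -((m1 : ℤ) - m0) ≤ (y1 : ℤ) - y0 := by omega
      exact_mod_cast this
    · have : (y1 : ℤ) - y0 ≤ (m1 : ℤ) - m0 := by omega
      exact_mod_cast this

lemma fin2_abs_key (m0 m1 y0 y1 : Fin 2) (h : m0 ≤ m1) (he : m0 = m1 → y0 = y1) :
    |((y1 : ℕ) : ℝ) - ((y0 : ℕ) : ℝ)| ≤ ((m1 : ℕ) : ℝ) - ((m0 : ℕ) : ℝ) := by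
  apply nat_abs_key _ _ _ _ (Fin.is_le _) (Fin.is_le _) h
  intro hv
  exact congrArg Fin.val (he (Fin.val_injective hv))

lemma fin2_int {Ω : Type*} [MeasurableSpace Ω] (P : Measure Ω) [IsProbabilityMeasure P]
    (f g : Ω → Fin 2) (hf : Measurable f) (hg : Measurable g) :
    Integrable (fun ω => ((f ω : ℕ) : ℝ) - ((g ω : ℕ) : ℝ)) P := by
  have hmf : Measurable fun ω => ((f ω : ℕ) : ℝ) :=
    (measurable_of_countable fun x : Fin 2 => ((x : ℕ) : ℝ)).comp' hf
  have hmg : Measurable fun ω => ((g ω : ℕ) : ℝ) :=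
    (measurable_of_countable fun x : Fin 2 => ((x : ℕ) : ℝ)).comp' hg
  refine ⟨(hmf.sub hmg).aestronglyMeasurable, ?_⟩
  apply HasFiniteIntegral.of_bounded (C := 2)
  filter_upwards with ω
  have h1 : ((f ω : ℕ) : ℝ) ≤ 1 := by
    have := Fin.is_le (f ω); exact_mod_cast this
  have h2 : ((g ω : ℕ) : ℝ) ≤ 1 := by
    have := Fin.is_le (g ω); exact_mod_cast this
  have h3 : (0:ℝ) ≤ ((f ω : ℕ) : ℝ) := by positivity
  have h4 : (0:ℝ) ≤ ((g ω : ℕ) : ℝ) := by positivity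
  rw [Real.norm_eq_abs, abs_le]
  constructor <;> linarith

/-- Under monotonic mediator response, the ATM is nonnegative and bounds the
magnitude of the ANIE: `α ≥ 0` and `|δ(a)| ≤ α` for each `a`. -/
theorem abs_anie_le_atm_of_mmr
    {Ω : Type*} [MeasurableSpace Ω] (P : Measure Ω) [IsProbabilityMeasure P]
    (M : Fin 2 → Ω → Fin 2) (Y : Fin 2 → Fin 2 → Ω → Fin 2)
    (hM : ∀ b, Measurable (M b)) (hY : ∀ a m, Measurable (Y a m))
    (hMMR : ∀ᵐ ω ∂P, M 0 ω ≤ M 1 ω) :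
    0 ≤ atm P M ∧ ∀ a : Fin 2, |anie P M Y a| ≤ atm P M := by
  have hgint := fin2_int P (M 1) (M 0) (hM 1) (hM 0)
  constructor
  · apply integral_nonneg_of_ae
    filter_upwards [hMMR] with ω h
    have h1 : (M 0 ω : ℕ) ≤ (M 1 ω : ℕ) := h
    have h2 : ((M 0 ω : ℕ) : ℝ) ≤ ((M 1 ω : ℕ) : ℝ) := by exact_mod_cast h1
    simpa using sub_nonneg.mpr h2
  · intro a
    have hF : Measurable (fun p : Ω × Fin 2 => Y a p.2 p.1) :=
      measurable_from_prod_countable_left (fun m => hY a m)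
    have h1 : Measurable fun ω => Y a (M 1 ω) ω :=
      hF.comp' (measurable_id.prodMk (hM 1))
    have h0 : Measurable fun ω => Y a (M 0 ω) ω :=
      hF.comp' (measurable_id.prodMk (hM 0))
    have hfint := fin2_int P _ _ h1 h0
    calc |anie P M Y a| ≤ ∫ ω, |((Y a (M 1 ω) ω : ℕ) : ℝ) - ((Y a (M 0 ω) ω : ℕ) : ℝ)| ∂P :=
          by simpa [anie, Real.norm_eq_abs] using
            norm_integral_le_integral_norm (μ := P)
              (fun ω => ((Y a (M 1 ω) ω : ℕ) : ℝ) - ((Y a (M 0 ω) ω : ℕ) : ℝ))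
      _ ≤ atm P M := by
          apply integral_mono_ae hfint.abs hgint
          filter_upwards [hMMR] with ω h
          exact fin2_abs_key _ _ _ _ h (fun he => by rw [he])
end

section
/- (Proposition 1, level a = 0.) Under the monotonic mediator response assumption, the average natural indirect effect at treatment level 0 satisfies max{−α, −p_{10·0}} ≤ δ(0) ≤ min{α, p_{00·0}}. -/
open MeasureTheory

lemma fin2_cases' (x : Fin 2) : x = 0 ∨ x = 1 := by
  revert x; decide

lemma fin2_le_one (x : Fin 2) : ((x : ℕ) : ℝ) ≤ 1 := by
  have := x.isLt
  exact_mod_cast Nat.lt_succ_iff.mp this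

lemma fin2_nonneg (x : Fin 2) : (0 : ℝ) ≤ ((x : ℕ) : ℝ) := Nat.cast_nonneg _

/-- Proposition 1, level `a = 0`: under monotonic mediator response,
`max{−α, −p_{10·0}} ≤ δ(0) ≤ min{α, p_{00·0}}`. -/
theorem mmr_bounds_anie_zero
    {Ω : Type*} [MeasurableSpace Ω] (P : Measure Ω) [IsProbabilityMeasure P]
    (M : Fin 2 → Ω → Fin 2) (Y : Fin 2 → Fin 2 → Ω → Fin 2)
    (hM : ∀ b, Measurable (M b)) (hY : ∀ a m, Measurable (Y a m))
    (hMMR : ∀ᵐ ω ∂P, M 0 ω ≤ M 1 ω) :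
    max (-atm P M) (-pobs P M Y 1 0 0) ≤ anie P M Y 0 ∧
    anie P M Y 0 ≤ min (atm P M) (pobs P M Y 0 0 0) := by
  -- the composed response is measurable
  have hYM : ∀ b : Fin 2, Measurable (fun ω => Y 0 (M b ω) ω) := by
    intro b
    have heq : (fun ω => Y 0 (M b ω) ω)
        = fun ω => if M b ω = 0 then Y 0 0 ω else Y 0 1 ω := by
      funext ω
      rcases fin2_cases' (M b ω) with h | h <;> simp [h]
    rw [heq]
    exact Measurable.ite ((hM b) (measurableSet_singleton 0)) (hY 0 0) (hY 0 1)
  set f : Ω → ℝ := fun ω => ((Y 0 (M 1 ω) ω : ℕ) : ℝ) - ((Y 0 (M 0 ω) ω : ℕ) : ℝ) with hf_def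
  set g : Ω → ℝ := fun ω => ((M 1 ω : ℕ) : ℝ) - ((M 0 ω : ℕ) : ℝ) with hg_def
  have hfm : Measurable f := by
    apply Measurable.sub <;>
      exact ((Measurable.of_discrete (f := fun x : Fin 2 => ((x : ℕ) : ℝ))).comp (hYM _))
  have hgm : Measurable g := by
    apply Measurable.sub <;>
      exact ((Measurable.of_discrete (f := fun x : Fin 2 => ((x : ℕ) : ℝ))).comp (hM _))
  have hfi : Integrable f P := by
    refine (integrable_const (2 : ℝ)).mono' hfm.aestronglyMeasurable (ae_of_all _ ?_)
    intro ω
    have h1 := fin2_le_one (Y 0 (M 1 ω) ω)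
    have h2 := fin2_le_one (Y 0 (M 0 ω) ω)
    have h3 := fin2_nonneg (Y 0 (M 1 ω) ω)
    have h4 := fin2_nonneg (Y 0 (M 0 ω) ω)
    simp only [hf_def, Real.norm_eq_abs, abs_le]
    constructor <;> linarith
  have hgi : Integrable g P := by
    refine (integrable_const (2 : ℝ)).mono' hgm.aestronglyMeasurable (ae_of_all _ ?_)
    intro ω
    have h1 := fin2_le_one (M 1 ω)
    have h2 := fin2_le_one (M 0 ω)
    have h3 := fin2_nonneg (M 1 ω)
    have h4 := fin2_nonneg (M 0 ω)
    simp only [hg_def, Real.norm_eq_abs, abs_le]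
    constructor <;> linarith
  -- the pobs sets
  set S0 : Set Ω := {ω | Y 0 (M 0 ω) ω = 0 ∧ M 0 ω = 0} with hS0_def
  set S1 : Set Ω := {ω | Y 0 (M 0 ω) ω = 1 ∧ M 0 ω = 0} with hS1_def
  have hS0m : MeasurableSet S0 := by
    have : S0 = (fun ω => Y 0 (M 0 ω) ω) ⁻¹' {0} ∩ (M 0) ⁻¹' {0} := by
      ext ω; simp [hS0_def, Set.mem_setOf_eq]
    rw [this]
    exact ((hYM 0) (measurableSet_singleton 0)).inter ((hM 0) (measurableSet_singleton 0))
  have hS1m : MeasurableSet S1 := by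
    have : S1 = (fun ω => Y 0 (M 0 ω) ω) ⁻¹' {1} ∩ (M 0) ⁻¹' {0} := by
      ext ω; simp [hS1_def, Set.mem_setOf_eq]
    rw [this]
    exact ((hYM 0) (measurableSet_singleton 1)).inter ((hM 0) (measurableSet_singleton 0))
  have hind0 : Integrable (S0.indicator (fun _ => (1 : ℝ))) P :=
    (integrable_const (1 : ℝ)).indicator hS0m
  have hind1 : Integrable (S1.indicator (fun _ => (1 : ℝ))) P :=
    (integrable_const (1 : ℝ)).indicator hS1m
  have hpobs0 : pobs P M Y 0 0 0 = ∫ ω, S0.indicator (fun _ => (1 : ℝ)) ω ∂P := by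
    rw [integral_indicator_const _ hS0m]
    simp [pobs, hS0_def, Measure.real]
  have hpobs1 : pobs P M Y 1 0 0 = ∫ ω, S1.indicator (fun _ => (1 : ℝ)) ω ∂P := by
    rw [integral_indicator_const _ hS1m]
    simp [pobs, hS1_def, Measure.real]
  have hanie : anie P M Y 0 = ∫ ω, f ω ∂P := rfl
  have hatm : atm P M = ∫ ω, g ω ∂P := rfl
  -- pointwise bounds under MMR
  have key : ∀ ω, M 0 ω ≤ M 1 ω →
      (f ω ≤ g ω ∧ f ω ≤ S0.indicator (fun _ => (1 : ℝ)) ω) ∧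
      (-(g ω) ≤ f ω ∧ -(S1.indicator (fun _ => (1 : ℝ)) ω) ≤ f ω) := by
    intro ω hω
    by_cases heq : M 0 ω = M 1 ω
    · have hf0 : f ω = 0 := by simp [hf_def, heq]
      have hg0 : g ω = 0 := by simp [hg_def, heq]
      have hind_nonneg0 : (0 : ℝ) ≤ S0.indicator (fun _ => (1 : ℝ)) ω :=
        Set.indicator_nonneg (fun _ _ => zero_le_one) ω
      have hind_nonneg1 : (0 : ℝ) ≤ S1.indicator (fun _ => (1 : ℝ)) ω :=
        Set.indicator_nonneg (fun _ _ => zero_le_one) ω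
      refine ⟨⟨by simp [hf0, hg0], ?_⟩, ⟨by simp [hf0, hg0], ?_⟩⟩ <;> simp [hf0] <;> linarith
    · -- then M 0 ω = 0 and M 1 ω = 1
      have h0 : M 0 ω = 0 := by
        rcases fin2_cases' (M 0 ω) with h | h
        · exact h
        · rcases fin2_cases' (M 1 ω) with h' | h'
          · rw [h, h'] at hω; exact absurd hω (by decide)
          · exact absurd (h.trans h'.symm) heq
      have h1 : M 1 ω = 1 := by
        rcases fin2_cases' (M 1 ω) with h' | h'
        · exact absurd (h0.trans h'.symm) heq
        · exact h'
      have hg1 : g ω = 1 := by simp [hg_def, h0, h1]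
      have hfval : f ω = ((Y 0 1 ω : ℕ) : ℝ) - ((Y 0 0 ω : ℕ) : ℝ) := by
        simp [hf_def, h0, h1]
      have hy1le := fin2_le_one (Y 0 1 ω)
      have hy0le := fin2_le_one (Y 0 0 ω)
      have hy1ge := fin2_nonneg (Y 0 1 ω)
      have hy0ge := fin2_nonneg (Y 0 0 ω)
      constructor
      · constructor
        · rw [hg1, hfval]; linarith
        · by_cases hy0 : Y 0 0 ω = 0
          · have hmem : ω ∈ S0 := by
              simp only [hS0_def, Set.mem_setOf_eq, h0]
              exact ⟨hy0, trivial⟩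
            rw [Set.indicator_of_mem hmem, hfval, hy0]
            simp only [Fin.val_zero, Nat.cast_zero, sub_zero]
            exact hy1le
          · have hy0' : Y 0 0 ω = 1 := (fin2_cases' _).resolve_left hy0
            have hind_nonneg : (0 : ℝ) ≤ S0.indicator (fun _ => (1 : ℝ)) ω :=
              Set.indicator_nonneg (fun _ _ => zero_le_one) ω
            rw [hfval, hy0']
            simp only [Fin.val_one, Nat.cast_one]
            linarith
      · constructor
        · rw [hg1, hfval]; linarith
        · by_cases hy0 : Y 0 0 ω = 1
          · have hmem : ω ∈ S1 := by
              simp only [hS1_def, Set.mem_setOf_eq, h0]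
              exact ⟨hy0, trivial⟩
            rw [Set.indicator_of_mem hmem, hfval, hy0]
            simp only [Fin.val_one, Nat.cast_one]
            linarith
          · have hy0' : Y 0 0 ω = 0 := (fin2_cases' _).resolve_right hy0
            have hind_nonneg : (0 : ℝ) ≤ S1.indicator (fun _ => (1 : ℝ)) ω :=
              Set.indicator_nonneg (fun _ _ => zero_le_one) ω
            rw [hfval, hy0']
            simp only [Fin.val_zero, Nat.cast_zero, sub_zero]
            linarith
  have h_fg : ∀ᵐ ω ∂P, f ω ≤ g ω := hMMR.mono fun ω hω => ((key ω hω).1).1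
  have h_f0 : ∀ᵐ ω ∂P, f ω ≤ S0.indicator (fun _ => (1 : ℝ)) ω :=
    hMMR.mono fun ω hω => ((key ω hω).1).2
  have h_gf : ∀ᵐ ω ∂P, -(g ω) ≤ f ω := hMMR.mono fun ω hω => ((key ω hω).2).1
  have h_1f : ∀ᵐ ω ∂P, -(S1.indicator (fun _ => (1 : ℝ)) ω) ≤ f ω :=
    hMMR.mono fun ω hω => ((key ω hω).2).2
  constructor
  · apply max_le
    · rw [hanie, hatm, ← integral_neg]
      exact integral_mono_ae hgi.neg hfi h_gf
    · rw [hanie, hpobs1, ← integral_neg]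
      exact integral_mono_ae hind1.neg hfi h_1f
  · apply le_min
    · rw [hanie, hatm]
      exact integral_mono_ae hfi hgi h_fg
    · rw [hanie, hpobs0]
      exact integral_mono_ae hfi hind0 h_f0
end

section
/- (No-assumption bounds, level a = 0.) Without any assumption beyond the potential-outcomes setup, the average natural indirect effect at treatment level 0 satisfies max{−p_{10·0} − p_{11·0}, −p_{01·1} − p_{11·1} − p_{11·0}, −p_{00·1} − p_{10·1} − p_{10·0}} ≤ δ(0) ≤ min{p_{00·0} + p_{01·0}, p_{01·1} + p_{11·1} + p_{01·0}, p_{00·0} + p_{00·1} + p_{10·1}}. -/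
open MeasureTheory

private lemma int_le_two {Ω : Type*} [MeasurableSpace Ω] (P : Measure Ω) [IsProbabilityMeasure P]
    (f : Ω → ℝ) (hf : Integrable f P) (S T : Set Ω) (hS : MeasurableSet S) (hT : MeasurableSet T)
    (h : ∀ ω, f ω ≤ S.indicator 1 ω + T.indicator 1 ω) :
    ∫ ω, f ω ∂P ≤ (P S).toReal + (P T).toReal := by
  have hiS : Integrable (S.indicator (1 : Ω → ℝ)) P := (integrable_const 1).indicator hS
  have hiT : Integrable (T.indicator (1 : Ω → ℝ)) P := (integrable_const 1).indicator hT
  calc ∫ ω, f ω ∂P ≤ ∫ ω, (S.indicator 1 ω + T.indicator 1 ω) ∂P :=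
        integral_mono hf (hiS.add hiT) h
    _ = (P S).toReal + (P T).toReal := by
        rw [integral_add hiS hiT, integral_indicator_one hS, integral_indicator_one hT]
        rfl

private lemma int_le_three {Ω : Type*} [MeasurableSpace Ω] (P : Measure Ω) [IsProbabilityMeasure P]
    (f : Ω → ℝ) (hf : Integrable f P) (S T U : Set Ω)
    (hS : MeasurableSet S) (hT : MeasurableSet T) (hU : MeasurableSet U)
    (h : ∀ ω, f ω ≤ S.indicator 1 ω + T.indicator 1 ω + U.indicator 1 ω) :
    ∫ ω, f ω ∂P ≤ (P S).toReal + (P T).toReal + (P U).toReal := by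
  have hiS : Integrable (S.indicator (1 : Ω → ℝ)) P := (integrable_const 1).indicator hS
  have hiT : Integrable (T.indicator (1 : Ω → ℝ)) P := (integrable_const 1).indicator hT
  have hiU : Integrable (U.indicator (1 : Ω → ℝ)) P := (integrable_const 1).indicator hU
  calc ∫ ω, f ω ∂P ≤ ∫ ω, (S.indicator 1 ω + T.indicator 1 ω + U.indicator 1 ω) ∂P :=
        integral_mono hf ((hiS.add hiT).add hiU) h
    _ = (P S).toReal + (P T).toReal + (P U).toReal := by
        have h1 : Integrable (fun ω => S.indicator (1 : Ω → ℝ) ω + T.indicator (1 : Ω → ℝ) ω) P := by exact hiS.add hiT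
        rw [integral_add h1 hiU, integral_add hiS hiT,
          integral_indicator_one hS, integral_indicator_one hT, integral_indicator_one hU]
        rfl

set_option maxHeartbeats 2000000 in
/-- No-assumption sharp bounds for the ANIE at level `a = 0` (Imai–Yamamoto):
`max{−p₁₀·₀ − p₁₁·₀, −p₀₁·₁ − p₁₁·₁ − p₁₁·₀, −p₀₀·₁ − p₁₀·₁ − p₁₀·₀} ≤ δ(0)
  ≤ min{p₀₀·₀ + p₀₁·₀, p₀₁·₁ + p₁₁·₁ + p₀₁·₀, p₀₀·₀ + p₀₀·₁ + p₁₀·₁}`. -/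
theorem no_assumption_bounds_anie_zero
    {Ω : Type*} [MeasurableSpace Ω] (P : Measure Ω) [IsProbabilityMeasure P]
    (M : Fin 2 → Ω → Fin 2) (Y : Fin 2 → Fin 2 → Ω → Fin 2)
    (hM : ∀ b, Measurable (M b)) (hY : ∀ a m, Measurable (Y a m)) :
    max (max (-pobs P M Y 1 0 0 - pobs P M Y 1 1 0)
             (-pobs P M Y 0 1 1 - pobs P M Y 1 1 1 - pobs P M Y 1 1 0))
        (-pobs P M Y 0 0 1 - pobs P M Y 1 0 1 - pobs P M Y 1 0 0)
      ≤ anie P M Y 0 ∧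
    anie P M Y 0 ≤
      min (min (pobs P M Y 0 0 0 + pobs P M Y 0 1 0)
               (pobs P M Y 0 1 1 + pobs P M Y 1 1 1 + pobs P M Y 0 1 0))
          (pobs P M Y 0 0 0 + pobs P M Y 0 0 1 + pobs P M Y 1 0 1) := by
  -- measurability of ω ↦ Y a (M b ω) ω
  have hG : ∀ a b : Fin 2, Measurable fun ω => Y a (M b ω) ω := by
    intro a b
    have he : (fun ω => Y a (M b ω) ω) = fun ω => if M b ω = 0 then Y a 0 ω else Y a 1 ω := by
      funext ω
      rcases (show M b ω = 0 ∨ M b ω = 1 by omega) with h | h <;> simp [h]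
    rw [he]
    exact Measurable.ite ((hM b) (measurableSet_singleton 0)) (hY a 0) (hY a 1)
  have hGR : ∀ a b : Fin 2, Measurable fun ω => ((Y a (M b ω) ω : ℕ) : ℝ) := by
    intro a b
    exact (measurable_from_top (f := fun x : Fin 2 => ((x : ℕ) : ℝ))).comp (hG a b)
  -- the integrand of anie at a = 0
  set f : Ω → ℝ := fun ω => ((Y 0 (M 1 ω) ω : ℕ) : ℝ) - ((Y 0 (M 0 ω) ω : ℕ) : ℝ) with hfdef
  have hfint : Integrable f P := by
    refine Integrable.mono' (integrable_const 1)
      ((hGR 0 1).sub (hGR 0 0)).aestronglyMeasurable (ae_of_all _ fun ω => ?_)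
    rcases (show Y 0 (M 1 ω) ω = 0 ∨ Y 0 (M 1 ω) ω = 1 by omega) with h1 | h1 <;>
      rcases (show Y 0 (M 0 ω) ω = 0 ∨ Y 0 (M 0 ω) ω = 1 by omega) with h2 | h2 <;>
        simp [hfdef, h1, h2, Real.norm_eq_abs]
  have hfnint : Integrable (fun ω => -f ω) P := hfint.neg
  -- measurability of observation sets
  have hSet : ∀ y m a : Fin 2, MeasurableSet {ω | Y a (M a ω) ω = y ∧ M a ω = m} := by
    intro y m a
    exact ((hG a a) (measurableSet_singleton y)).inter ((hM a) (measurableSet_singleton m))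
  have hanie : anie P M Y 0 = ∫ ω, f ω ∂P := rfl
  -- pointwise case analysis helper
  have key : ∀ (y m a : Fin 2) (ω : Ω),
      ({ω | Y a (M a ω) ω = y ∧ M a ω = m} : Set Ω).indicator (1 : Ω → ℝ) ω =
        if Y a (M a ω) ω = y ∧ M a ω = m then 1 else 0 := by
    intro y m a ω
    simp [Set.indicator_apply, Set.mem_setOf_eq]
  constructor
  · -- lower bounds
    refine max_le (max_le ?_ ?_) ?_
    · -- -p100 - p110 ≤ δ(0)
      have h := int_le_two P (fun ω => -f ω) hfnint _ _ (hSet 1 0 0) (hSet 1 1 0) ?_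
      · rw [integral_neg] at h
        simp only [pobs, hanie]
        linarith
      · intro ω
        rw [key, key]
        rcases (show M 0 ω = 0 ∨ M 0 ω = 1 by omega) with h0 | h0 <;>
          rcases (show M 1 ω = 0 ∨ M 1 ω = 1 by omega) with h1 | h1 <;>
            rcases (show Y 0 0 ω = 0 ∨ Y 0 0 ω = 1 by omega) with hy0 | hy0 <;>
              rcases (show Y 0 1 ω = 0 ∨ Y 0 1 ω = 1 by omega) with hy1 | hy1 <;>
                simp [hfdef, h0, h1, hy0, hy1]
    · -- -p011 - p111 - p110 ≤ δ(0)
      have h := int_le_three P (fun ω => -f ω) hfnint _ _ _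
        (hSet 0 1 1) (hSet 1 1 1) (hSet 1 1 0) ?_
      · rw [integral_neg] at h
        simp only [pobs, hanie]
        linarith
      · intro ω
        rw [key, key, key]
        rcases (show M 0 ω = 0 ∨ M 0 ω = 1 by omega) with h0 | h0 <;>
          rcases (show M 1 ω = 0 ∨ M 1 ω = 1 by omega) with h1 | h1 <;>
            rcases (show Y 0 0 ω = 0 ∨ Y 0 0 ω = 1 by omega) with hy0 | hy0 <;>
              rcases (show Y 0 1 ω = 0 ∨ Y 0 1 ω = 1 by omega) with hy1 | hy1 <;>
                rcases (show Y 1 0 ω = 0 ∨ Y 1 0 ω = 1 by omega) with hz0 | hz0 <;>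
                  rcases (show Y 1 1 ω = 0 ∨ Y 1 1 ω = 1 by omega) with hz1 | hz1 <;>
                    simp [hfdef, h0, h1, hy0, hy1, hz0, hz1]
    · -- -p001 - p101 - p100 ≤ δ(0)
      have h := int_le_three P (fun ω => -f ω) hfnint _ _ _
        (hSet 0 0 1) (hSet 1 0 1) (hSet 1 0 0) ?_
      · rw [integral_neg] at h
        simp only [pobs, hanie]
        linarith
      · intro ω
        rw [key, key, key]
        rcases (show M 0 ω = 0 ∨ M 0 ω = 1 by omega) with h0 | h0 <;>
          rcases (show M 1 ω = 0 ∨ M 1 ω = 1 by omega) with h1 | h1 <;>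
            rcases (show Y 0 0 ω = 0 ∨ Y 0 0 ω = 1 by omega) with hy0 | hy0 <;>
              rcases (show Y 0 1 ω = 0 ∨ Y 0 1 ω = 1 by omega) with hy1 | hy1 <;>
                rcases (show Y 1 0 ω = 0 ∨ Y 1 0 ω = 1 by omega) with hz0 | hz0 <;>
                  rcases (show Y 1 1 ω = 0 ∨ Y 1 1 ω = 1 by omega) with hz1 | hz1 <;>
                    simp [hfdef, h0, h1, hy0, hy1, hz0, hz1]
  · -- upper bounds
    refine le_min (le_min ?_ ?_) ?_
    · -- δ(0) ≤ p000 + p010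
      have h := int_le_two P f hfint _ _ (hSet 0 0 0) (hSet 0 1 0) ?_
      · simp only [pobs, hanie]
        linarith
      · intro ω
        rw [key, key]
        rcases (show M 0 ω = 0 ∨ M 0 ω = 1 by omega) with h0 | h0 <;>
          rcases (show M 1 ω = 0 ∨ M 1 ω = 1 by omega) with h1 | h1 <;>
            rcases (show Y 0 0 ω = 0 ∨ Y 0 0 ω = 1 by omega) with hy0 | hy0 <;>
              rcases (show Y 0 1 ω = 0 ∨ Y 0 1 ω = 1 by omega) with hy1 | hy1 <;>
                simp [hfdef, h0, h1, hy0, hy1]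
    · -- δ(0) ≤ p011 + p111 + p010
      have h := int_le_three P f hfint _ _ _
        (hSet 0 1 1) (hSet 1 1 1) (hSet 0 1 0) ?_
      · simp only [pobs, hanie]
        linarith
      · intro ω
        rw [key, key, key]
        rcases (show M 0 ω = 0 ∨ M 0 ω = 1 by omega) with h0 | h0 <;>
          rcases (show M 1 ω = 0 ∨ M 1 ω = 1 by omega) with h1 | h1 <;>
            rcases (show Y 0 0 ω = 0 ∨ Y 0 0 ω = 1 by omega) with hy0 | hy0 <;>
              rcases (show Y 0 1 ω = 0 ∨ Y 0 1 ω = 1 by omega) with hy1 | hy1 <;>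
                rcases (show Y 1 0 ω = 0 ∨ Y 1 0 ω = 1 by omega) with hz0 | hz0 <;>
                  rcases (show Y 1 1 ω = 0 ∨ Y 1 1 ω = 1 by omega) with hz1 | hz1 <;>
                    simp [hfdef, h0, h1, hy0, hy1, hz0, hz1]
    · -- δ(0) ≤ p000 + p001 + p101
      have h := int_le_three P f hfint _ _ _
        (hSet 0 0 0) (hSet 0 0 1) (hSet 1 0 1) ?_
      · simp only [pobs, hanie]
        linarith
      · intro ω
        rw [key, key, key]
        rcases (show M 0 ω = 0 ∨ M 0 ω = 1 by omega) with h0 | h0 <;>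
          rcases (show M 1 ω = 0 ∨ M 1 ω = 1 by omega) with h1 | h1 <;>
            rcases (show Y 0 0 ω = 0 ∨ Y 0 0 ω = 1 by omega) with hy0 | hy0 <;>
              rcases (show Y 0 1 ω = 0 ∨ Y 0 1 ω = 1 by omega) with hy1 | hy1 <;>
                rcases (show Y 1 0 ω = 0 ∨ Y 1 0 ω = 1 by omega) with hz0 | hz0 <;>
                  rcases (show Y 1 1 ω = 0 ∨ Y 1 1 ω = 1 by omega) with hz1 | hz1 <;>
                    simp [hfdef, h0, h1, hy0, hy1, hz0, hz1]
end

section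
/- (No-assumption bounds, level a = 1.) Without any assumption beyond the potential-outcomes setup, the average natural indirect effect at treatment level 1 satisfies max{−p_{00·1} − p_{01·1}, −p_{01·1} − p_{01·0} − p_{11·0}, −p_{00·0} − p_{00·1} − p_{10·0}} ≤ δ(1) ≤ min{p_{10·1} + p_{11·1}, p_{01·0} + p_{11·0} + p_{11·1}, p_{00·0} + p_{10·0} + p_{10·1}}. -/
open MeasureTheory

lemma measW {Ω : Type*} [MeasurableSpace Ω]
    (M : Fin 2 → Ω → Fin 2) (Y : Fin 2 → Fin 2 → Ω → Fin 2)
    (hM : ∀ b, Measurable (M b)) (hY : ∀ a m, Measurable (Y a m)) (a b : Fin 2) :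
    Measurable (fun ω => Y a (M b ω) ω) := by
  have h : (fun ω => Y a (M b ω) ω) = fun ω => if M b ω = 0 then Y a 0 ω else Y a 1 ω := by
    funext ω; rcases fin2_cases' (M b ω) with h | h <;> simp [h]
  rw [h]
  exact Measurable.ite (hM b (measurableSet_singleton 0)) (hY a 0) (hY a 1)

set_option maxHeartbeats 1600000 in
/-- No-assumption sharp bounds for the ANIE at level `a = 1` (Imai–Yamamoto):
`max{−p₀₀·₁ − p₀₁·₁, −p₀₁·₁ − p₀₁·₀ − p₁₁·₀, −p₀₀·₀ − p₀₀·₁ − p₁₀·₀} ≤ δ(1)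
  ≤ min{p₁₀·₁ + p₁₁·₁, p₀₁·₀ + p₁₁·₀ + p₁₁·₁, p₀₀·₀ + p₁₀·₀ + p₁₀·₁}`. -/
theorem no_assumption_bounds_anie_one
    {Ω : Type*} [MeasurableSpace Ω] (P : Measure Ω) [IsProbabilityMeasure P]
    (M : Fin 2 → Ω → Fin 2) (Y : Fin 2 → Fin 2 → Ω → Fin 2)
    (hM : ∀ b, Measurable (M b)) (hY : ∀ a m, Measurable (Y a m)) :
    max (max (-pobs P M Y 0 0 1 - pobs P M Y 0 1 1)
             (-pobs P M Y 0 1 1 - pobs P M Y 0 1 0 - pobs P M Y 1 1 0))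
        (-pobs P M Y 0 0 0 - pobs P M Y 0 0 1 - pobs P M Y 1 0 0)
      ≤ anie P M Y 1 ∧
    anie P M Y 1 ≤
      min (min (pobs P M Y 1 0 1 + pobs P M Y 1 1 1)
               (pobs P M Y 0 1 0 + pobs P M Y 1 1 0 + pobs P M Y 1 1 1))
          (pobs P M Y 0 0 0 + pobs P M Y 1 0 0 + pobs P M Y 1 0 1) := by
  classical
  -- the observable sets
  set S : Fin 2 → Fin 2 → Fin 2 → Set Ω :=
    fun y m a => {ω | Y a (M a ω) ω = y ∧ M a ω = m} with hS
  have hSm : ∀ y m a, MeasurableSet (S y m a) := by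
    intro y m a
    have h1 : MeasurableSet ((fun ω => Y a (M a ω) ω) ⁻¹' {y}) :=
      measW M Y hM hY a a (measurableSet_singleton y)
    have h2 : MeasurableSet ((M a) ⁻¹' {m}) := hM a (measurableSet_singleton m)
    exact h1.inter h2
  -- indicators
  have hIint : ∀ y m a, Integrable ((S y m a).indicator (fun _ => (1:ℝ))) P :=
    fun y m a => (integrable_const 1).indicator (hSm y m a)
  have hIval : ∀ y m a, ∫ ω, (S y m a).indicator (fun _ => (1:ℝ)) ω ∂P = pobs P M Y y m a := by
    intro y m a
    rw [pobs]
    exact integral_indicator_one (hSm y m a)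
  -- the integrand of the ANIE
  set f : Ω → ℝ := fun ω => (((Y 1 (M 1 ω) ω : Fin 2) : ℕ) : ℝ) with hf
  set g : Ω → ℝ := fun ω => (((Y 1 (M 0 ω) ω : Fin 2) : ℕ) : ℝ) with hg
  have hfind : f = ({ω | Y 1 (M 1 ω) ω = 1}).indicator (fun _ => (1:ℝ)) := by
    funext ω
    rcases fin2_cases' (Y 1 (M 1 ω) ω) with h | h <;>
      simp [hf, h, Set.indicator_apply]
  have hgind : g = ({ω | Y 1 (M 0 ω) ω = 1}).indicator (fun _ => (1:ℝ)) := by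
    funext ω
    rcases fin2_cases' (Y 1 (M 0 ω) ω) with h | h <;>
      simp [hg, h, Set.indicator_apply]
  have hfI : Integrable f P := by
    rw [hfind]
    exact (integrable_const 1).indicator (measW M Y hM hY 1 1 (measurableSet_singleton 1))
  have hgI : Integrable g P := by
    rw [hgind]
    exact (integrable_const 1).indicator (measW M Y hM hY 1 0 (measurableSet_singleton 1))
  have hfgI : Integrable (fun ω => f ω - g ω) P := hfI.sub hgI
  have hanie : anie P M Y 1 = ∫ ω, (f ω - g ω) ∂P := rfl
  -- two-term and three-term bounds
  have two_le : ∀ y₁ m₁ a₁ y₂ m₂ a₂,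
      (∀ ω, f ω - g ω ≤ (S y₁ m₁ a₁).indicator (fun _ => (1:ℝ)) ω
        + (S y₂ m₂ a₂).indicator (fun _ => (1:ℝ)) ω) →
      anie P M Y 1 ≤ pobs P M Y y₁ m₁ a₁ + pobs P M Y y₂ m₂ a₂ := by
    intro y₁ m₁ a₁ y₂ m₂ a₂ hpt
    calc anie P M Y 1 = ∫ ω, (f ω - g ω) ∂P := hanie
      _ ≤ ∫ ω, ((S y₁ m₁ a₁).indicator (fun _ => (1:ℝ)) ω
            + (S y₂ m₂ a₂).indicator (fun _ => (1:ℝ)) ω) ∂P :=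
          integral_mono hfgI ((hIint _ _ _).add (hIint _ _ _)) hpt
      _ = pobs P M Y y₁ m₁ a₁ + pobs P M Y y₂ m₂ a₂ := by
          rw [integral_add (hIint _ _ _) (hIint _ _ _), hIval, hIval]
  have three_le : ∀ y₁ m₁ a₁ y₂ m₂ a₂ y₃ m₃ a₃,
      (∀ ω, f ω - g ω ≤ (S y₁ m₁ a₁).indicator (fun _ => (1:ℝ)) ω
        + (S y₂ m₂ a₂).indicator (fun _ => (1:ℝ)) ω
        + (S y₃ m₃ a₃).indicator (fun _ => (1:ℝ)) ω) →
      anie P M Y 1 ≤ pobs P M Y y₁ m₁ a₁ + pobs P M Y y₂ m₂ a₂ + pobs P M Y y₃ m₃ a₃ := by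
    intro y₁ m₁ a₁ y₂ m₂ a₂ y₃ m₃ a₃ hpt
    calc anie P M Y 1 = ∫ ω, (f ω - g ω) ∂P := hanie
      _ ≤ ∫ ω, ((S y₁ m₁ a₁).indicator (fun _ => (1:ℝ)) ω
            + (S y₂ m₂ a₂).indicator (fun _ => (1:ℝ)) ω
            + (S y₃ m₃ a₃).indicator (fun _ => (1:ℝ)) ω) ∂P :=
          integral_mono hfgI (((hIint _ _ _).add (hIint _ _ _)).add (hIint _ _ _)) hpt
      _ = pobs P M Y y₁ m₁ a₁ + pobs P M Y y₂ m₂ a₂ + pobs P M Y y₃ m₃ a₃ := by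
          have h12 : Integrable (fun ω => (S y₁ m₁ a₁).indicator (fun _ => (1:ℝ)) ω
              + (S y₂ m₂ a₂).indicator (fun _ => (1:ℝ)) ω) P :=
            (hIint _ _ _).add (hIint _ _ _)
          rw [integral_add h12 (hIint _ _ _),
            integral_add (hIint _ _ _) (hIint _ _ _), hIval, hIval, hIval]
  have two_ge : ∀ y₁ m₁ a₁ y₂ m₂ a₂,
      (∀ ω, -(S y₁ m₁ a₁).indicator (fun _ => (1:ℝ)) ω
        - (S y₂ m₂ a₂).indicator (fun _ => (1:ℝ)) ω ≤ f ω - g ω) →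
      -pobs P M Y y₁ m₁ a₁ - pobs P M Y y₂ m₂ a₂ ≤ anie P M Y 1 := by
    intro y₁ m₁ a₁ y₂ m₂ a₂ hpt
    have h1 : ∫ ω, (-(S y₁ m₁ a₁).indicator (fun _ => (1:ℝ)) ω
        - (S y₂ m₂ a₂).indicator (fun _ => (1:ℝ)) ω) ∂P
        = -pobs P M Y y₁ m₁ a₁ - pobs P M Y y₂ m₂ a₂ := by
      have hn : Integrable (fun ω => -(S y₁ m₁ a₁).indicator (fun _ => (1:ℝ)) ω) P :=
        (hIint _ _ _).neg
      rw [integral_sub hn (hIint _ _ _), integral_neg, hIval, hIval]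
    calc -pobs P M Y y₁ m₁ a₁ - pobs P M Y y₂ m₂ a₂
        = ∫ ω, (-(S y₁ m₁ a₁).indicator (fun _ => (1:ℝ)) ω
            - (S y₂ m₂ a₂).indicator (fun _ => (1:ℝ)) ω) ∂P := h1.symm
      _ ≤ ∫ ω, (f ω - g ω) ∂P :=
          integral_mono (((hIint _ _ _).neg).sub (hIint _ _ _)) hfgI hpt
      _ = anie P M Y 1 := hanie.symm
  have three_ge : ∀ y₁ m₁ a₁ y₂ m₂ a₂ y₃ m₃ a₃,
      (∀ ω, -(S y₁ m₁ a₁).indicator (fun _ => (1:ℝ)) ω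
        - (S y₂ m₂ a₂).indicator (fun _ => (1:ℝ)) ω
        - (S y₃ m₃ a₃).indicator (fun _ => (1:ℝ)) ω ≤ f ω - g ω) →
      -pobs P M Y y₁ m₁ a₁ - pobs P M Y y₂ m₂ a₂ - pobs P M Y y₃ m₃ a₃ ≤ anie P M Y 1 := by
    intro y₁ m₁ a₁ y₂ m₂ a₂ y₃ m₃ a₃ hpt
    have h1 : ∫ ω, (-(S y₁ m₁ a₁).indicator (fun _ => (1:ℝ)) ω
        - (S y₂ m₂ a₂).indicator (fun _ => (1:ℝ)) ω
        - (S y₃ m₃ a₃).indicator (fun _ => (1:ℝ)) ω) ∂P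
        = -pobs P M Y y₁ m₁ a₁ - pobs P M Y y₂ m₂ a₂ - pobs P M Y y₃ m₃ a₃ := by
      have hn : Integrable (fun ω => -(S y₁ m₁ a₁).indicator (fun _ => (1:ℝ)) ω) P :=
        (hIint _ _ _).neg
      have hns : Integrable (fun ω => -(S y₁ m₁ a₁).indicator (fun _ => (1:ℝ)) ω
          - (S y₂ m₂ a₂).indicator (fun _ => (1:ℝ)) ω) P := hn.sub (hIint _ _ _)
      rw [integral_sub hns (hIint _ _ _), integral_sub hn (hIint _ _ _),
        integral_neg, hIval, hIval, hIval]
    calc -pobs P M Y y₁ m₁ a₁ - pobs P M Y y₂ m₂ a₂ - pobs P M Y y₃ m₃ a₃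
        = ∫ ω, (-(S y₁ m₁ a₁).indicator (fun _ => (1:ℝ)) ω
            - (S y₂ m₂ a₂).indicator (fun _ => (1:ℝ)) ω
            - (S y₃ m₃ a₃).indicator (fun _ => (1:ℝ)) ω) ∂P := h1.symm
      _ ≤ ∫ ω, (f ω - g ω) ∂P :=
          integral_mono ((((hIint _ _ _).neg).sub (hIint _ _ _)).sub (hIint _ _ _)) hfgI hpt
      _ = anie P M Y 1 := hanie.symm
  constructor
  · refine max_le (max_le ?_ ?_) ?_
    · refine two_ge 0 0 1 0 1 1 fun ω => ?_
      rcases fin2_cases' (M 0 ω) with h0 | h0 <;>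
      rcases fin2_cases' (M 1 ω) with h1 | h1 <;>
      rcases fin2_cases' (Y 1 0 ω) with hy0 | hy0 <;>
      rcases fin2_cases' (Y 1 1 ω) with hy1 | hy1 <;>
        simp [hf, hg, hS, Set.indicator_apply, h0, h1, hy0, hy1]
    · refine three_ge 0 1 1 0 1 0 1 1 0 fun ω => ?_
      rcases fin2_cases' (M 0 ω) with h0 | h0 <;>
      rcases fin2_cases' (M 1 ω) with h1 | h1 <;>
      rcases fin2_cases' (Y 1 0 ω) with hy0 | hy0 <;>
      rcases fin2_cases' (Y 1 1 ω) with hy1 | hy1 <;>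
      rcases fin2_cases' (Y 0 0 ω) with hz0 | hz0 <;>
      rcases fin2_cases' (Y 0 1 ω) with hz1 | hz1 <;>
        simp [hf, hg, hS, Set.indicator_apply, h0, h1, hy0, hy1, hz0, hz1]
    · refine three_ge 0 0 0 0 0 1 1 0 0 fun ω => ?_
      rcases fin2_cases' (M 0 ω) with h0 | h0 <;>
      rcases fin2_cases' (M 1 ω) with h1 | h1 <;>
      rcases fin2_cases' (Y 1 0 ω) with hy0 | hy0 <;>
      rcases fin2_cases' (Y 1 1 ω) with hy1 | hy1 <;>
      rcases fin2_cases' (Y 0 0 ω) with hz0 | hz0 <;>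
      rcases fin2_cases' (Y 0 1 ω) with hz1 | hz1 <;>
        simp [hf, hg, hS, Set.indicator_apply, h0, h1, hy0, hy1, hz0, hz1]
  · refine le_min (le_min ?_ ?_) ?_
    · refine two_le 1 0 1 1 1 1 fun ω => ?_
      rcases fin2_cases' (M 0 ω) with h0 | h0 <;>
      rcases fin2_cases' (M 1 ω) with h1 | h1 <;>
      rcases fin2_cases' (Y 1 0 ω) with hy0 | hy0 <;>
      rcases fin2_cases' (Y 1 1 ω) with hy1 | hy1 <;>
        simp [hf, hg, hS, Set.indicator_apply, h0, h1, hy0, hy1]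
    · refine three_le 0 1 0 1 1 0 1 1 1 fun ω => ?_
      rcases fin2_cases' (M 0 ω) with h0 | h0 <;>
      rcases fin2_cases' (M 1 ω) with h1 | h1 <;>
      rcases fin2_cases' (Y 1 0 ω) with hy0 | hy0 <;>
      rcases fin2_cases' (Y 1 1 ω) with hy1 | hy1 <;>
      rcases fin2_cases' (Y 0 0 ω) with hz0 | hz0 <;>
      rcases fin2_cases' (Y 0 1 ω) with hz1 | hz1 <;>
        simp [hf, hg, hS, Set.indicator_apply, h0, h1, hy0, hy1, hz0, hz1]
    · refine three_le 0 0 0 1 0 0 1 0 1 fun ω => ?_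
      rcases fin2_cases' (M 0 ω) with h0 | h0 <;>
      rcases fin2_cases' (M 1 ω) with h1 | h1 <;>
      rcases fin2_cases' (Y 1 0 ω) with hy0 | hy0 <;>
      rcases fin2_cases' (Y 1 1 ω) with hy1 | hy1 <;>
      rcases fin2_cases' (Y 0 0 ω) with hz0 | hz0 <;>
      rcases fin2_cases' (Y 0 1 ω) with hz1 | hz1 <;>
        simp [hf, hg, hS, Set.indicator_apply, h0, h1, hy0, hy1, hz0, hz1]
end

section
/- A zero indirect effect can never be ruled out from the observed data alone: for every potential-outcomes model (Ω, M₀, M₁, Y) there exists another potential-outcomes model (Ω', M₀', M₁', Y') with identical observable probabilities, p'_{ym·a} = p_{ym·a} for all y, m, a ∈ {0,1}, whose average natural indirect effects vanish at both treatment levels: δ'(0) = 0 and δ'(1) = 0. -/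
open MeasureTheory

lemma measurable_obs {Ω : Type*} [MeasurableSpace Ω]
    (M : Fin 2 → Ω → Fin 2) (Y : Fin 2 → Fin 2 → Ω → Fin 2)
    (hM : ∀ b, Measurable (M b)) (hY : ∀ a m, Measurable (Y a m)) (a : Fin 2) :
    Measurable (fun ω => Y a (M a ω) ω) := by
  have heq : (fun ω => Y a (M a ω) ω) = fun ω =>
      if M a ω = 0 then Y a 0 ω else Y a 1 ω := by
    funext ω
    by_cases h : M a ω = 0
    · simp [h]
    · have h1 : M a ω = 1 := by omega
      simp [h, h1]
  rw [heq]
  exact Measurable.ite ((hM a) (measurableSet_singleton 0)) (hY a 0) (hY a 1)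

/-- A zero indirect effect can never be ruled out from the observed data alone:
for every potential-outcomes model there exists another with identical observable
probabilities whose ANIEs vanish at both treatment levels. -/
theorem exists_model_same_pobs_zero_anie
    {Ω : Type*} [MeasurableSpace Ω] (P : Measure Ω) [IsProbabilityMeasure P]
    (M : Fin 2 → Ω → Fin 2) (Y : Fin 2 → Fin 2 → Ω → Fin 2)
    (hM : ∀ b, Measurable (M b)) (hY : ∀ a m, Measurable (Y a m)) :
    ∃ (Ω' : Type) (_ : MeasurableSpace Ω') (P' : Measure Ω'),
      IsProbabilityMeasure P' ∧
      ∃ (M' : Fin 2 → Ω' → Fin 2) (Y' : Fin 2 → Fin 2 → Ω' → Fin 2),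
        (∀ b, Measurable (M' b)) ∧ (∀ a m, Measurable (Y' a m)) ∧
        (∀ y m a : Fin 2, pobs P' M' Y' y m a = pobs P M Y y m a) ∧
        anie P' M' Y' 0 = 0 ∧ anie P' M' Y' 1 = 0 := by
  classical
  set T : Ω → (Fin 2 → Fin 2 × Fin 2) :=
    fun ω a => (M a ω, Y a (M a ω) ω) with hT
  have hTm : Measurable T := by
    apply measurable_pi_lambda
    intro a
    exact (hM a).prodMk (measurable_obs M Y hM hY a)
  refine ⟨Fin 2 → Fin 2 × Fin 2, inferInstance, P.map T, Measure.isProbabilityMeasure_map hTm.aemeasurable,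
    fun a ω' => (ω' a).1, fun a m ω' => (ω' a).2, ?_, ?_, ?_, ?_, ?_⟩
  · intro b; exact measurable_of_countable _
  · intro a m; exact measurable_of_countable _
  · intro y m a
    unfold pobs
    rw [Measure.map_apply hTm (Set.Finite.measurableSet (Set.toFinite _))]
    congr 1
  · unfold anie; simp
  · unfold anie; simp
end

section
/- A zero average treatment effect on the mediator does not rule out an indirect effect: there exists a potential-outcomes model (with Ω a finite probability space) in which α = 0 yet δ(1) > 0. -/
open MeasureTheory

/-- A zero ATM does not rule out an indirect effect: there is a finite
potential-outcomes model with `α = 0` yet `δ(1) > 0`. -/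
theorem exists_model_atm_zero_anie_pos :
    ∃ (Ω : Type) (_ : Fintype Ω) (_ : MeasurableSpace Ω) (P : Measure Ω),
      IsProbabilityMeasure P ∧
      ∃ (M : Fin 2 → Ω → Fin 2) (Y : Fin 2 → Fin 2 → Ω → Fin 2),
        (∀ b, Measurable (M b)) ∧ (∀ a m, Measurable (Y a m)) ∧
        atm P M = 0 ∧ 0 < anie P M Y 1 := by
  refine ⟨Bool, inferInstance, ⊤, (PMF.uniformOfFintype Bool).toMeasure, inferInstance,
    (fun b ω => if ω then b else 1 - b), (fun a m ω => if ω then m else 1),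
    fun b => measurable_of_finite _, fun a m => measurable_of_finite _, ?_, ?_⟩
  · unfold atm
    rw [integral_fintype (by
      exact Integrable.of_finite)]
    simp [Measure.real, PMF.toMeasure_apply_singleton _ _ (measurableSet_singleton _),
      PMF.uniformOfFintype_apply]
  · unfold anie
    rw [integral_fintype (by
      exact Integrable.of_finite)]
    simp [Measure.real, PMF.toMeasure_apply_singleton _ _ (measurableSet_singleton _),
      PMF.uniformOfFintype_apply]
end

section
/- (Proposition 2, sign claim.) Under the monotonic mediator response assumption, every lower-bound expression of Proposition 2 is nonpositive and every upper-bound expression is nonnegative: −α ≤ 0, p_{10·1} − p_{10·0} − p_{00·0} ≤ 0, −p_{11·1} − p_{00·1} − p_{10·0} ≤ 0, −p_{01·1} ≤ 0, and α ≥ 0, p_{11·1} + p_{10·0} + p_{00·0} ≥ 0, 2·p_{11·1} + 2·p_{00·1} ≥ 0, p_{11·1} ≥ 0. Consequently the Proposition 2 bounds for δ(1) always contain zero. -/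
open MeasureTheory

lemma pobs_nonneg {Ω : Type*} [MeasurableSpace Ω] (P : Measure Ω)
    (M : Fin 2 → Ω → Fin 2) (Y : Fin 2 → Fin 2 → Ω → Fin 2) (y m a : Fin 2) :
    0 ≤ pobs P M Y y m a := ENNReal.toReal_nonneg

/-- Proposition 2 (sign claim): under monotonic mediator response, every
lower-bound expression of Proposition 2 is nonpositive and every upper-bound
expression is nonnegative; consequently the Proposition 2 bounds for `δ(1)`
always contain zero. -/
theorem prop2_bounds_contain_zero
    {Ω : Type*} [MeasurableSpace Ω] (P : Measure Ω) [IsProbabilityMeasure P]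
    (M : Fin 2 → Ω → Fin 2) (Y : Fin 2 → Fin 2 → Ω → Fin 2)
    (hM : ∀ b, Measurable (M b)) (hY : ∀ a m, Measurable (Y a m))
    (hMMR : ∀ᵐ ω ∂P, M 0 ω ≤ M 1 ω) :
    (-atm P M ≤ 0) ∧
    (pobs P M Y 1 0 1 - pobs P M Y 1 0 0 - pobs P M Y 0 0 0 ≤ 0) ∧
    (-pobs P M Y 1 1 1 - pobs P M Y 0 0 1 - pobs P M Y 1 0 0 ≤ 0) ∧
    (-pobs P M Y 0 1 1 ≤ 0) ∧
    (0 ≤ atm P M) ∧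
    (0 ≤ pobs P M Y 1 1 1 + pobs P M Y 1 0 0 + pobs P M Y 0 0 0) ∧
    (0 ≤ 2 * pobs P M Y 1 1 1 + 2 * pobs P M Y 0 0 1) ∧
    (0 ≤ pobs P M Y 1 1 1) ∧
    (max (max (-atm P M) (pobs P M Y 1 0 1 - pobs P M Y 1 0 0 - pobs P M Y 0 0 0))
         (max (-pobs P M Y 1 1 1 - pobs P M Y 0 0 1 - pobs P M Y 1 0 0)
              (-pobs P M Y 0 1 1)) ≤ 0) ∧
    (0 ≤ min (min (atm P M) (pobs P M Y 1 1 1 + pobs P M Y 1 0 0 + pobs P M Y 0 0 0))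
             (min (2 * pobs P M Y 1 1 1 + 2 * pobs P M Y 0 0 1) (pobs P M Y 1 1 1))) := by
  have hatm : 0 ≤ atm P M := by
    apply integral_nonneg_of_ae
    filter_upwards [hMMR] with ω h
    have h2 : ((M 0 ω : ℕ) : ℝ) ≤ ((M 1 ω : ℕ) : ℝ) := by exact_mod_cast Fin.le_def.mp h
    simp only [Pi.zero_apply]
    linarith
  have hp := pobs_nonneg P M Y
  -- key inequality: p_{10·1} ≤ p_{10·0} + p_{00·0}
  have hkey : pobs P M Y 1 0 1 ≤ pobs P M Y 1 0 0 + pobs P M Y 0 0 0 := by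
    have hsub : P {ω | Y 1 (M 1 ω) ω = 1 ∧ M 1 ω = 0} ≤
        P ({ω | Y 0 (M 0 ω) ω = 1 ∧ M 0 ω = 0} ∪ {ω | Y 0 (M 0 ω) ω = 0 ∧ M 0 ω = 0}) := by
      apply measure_mono_ae
      filter_upwards [hMMR] with ω hle hmem
      have hM0 : M 0 ω = 0 := by
        have := hmem.2
        omega
      rcases Fin.exists_fin_two.mp ⟨Y 0 (M 0 ω) ω, rfl⟩ with _
      by_cases hY0 : Y 0 (M 0 ω) ω = 0
      · exact Or.inr ⟨hY0, hM0⟩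
      · exact Or.inl ⟨by omega, hM0⟩
    have hle2 := hsub.trans (measure_union_le _ _)
    unfold pobs
    rw [← ENNReal.toReal_add (measure_ne_top P _) (measure_ne_top P _)]
    exact ENNReal.toReal_mono (by simp [ENNReal.add_ne_top, measure_ne_top]) hle2
  refine ⟨by linarith, by linarith, by linarith [hp 1 1 1, hp 0 0 1, hp 1 0 0],
    by linarith [hp 0 1 1], hatm,
    by linarith [hp 1 1 1, hp 1 0 0, hp 0 0 0],
    by linarith [hp 1 1 1, hp 0 0 1], hp 1 1 1, ?_, ?_⟩
  · apply max_le <;> apply max_le <;>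
      first
        | linarith
        | linarith [hp 1 1 1, hp 0 0 1, hp 1 0 0, hp 0 1 1]
  · apply le_min <;> [skip; apply le_min] <;>
      first
        | exact le_min hatm (by linarith [hp 1 1 1, hp 1 0 0, hp 0 0 0])
        | linarith [hp 1 1 1, hp 0 0 1]
end

section
/- Even assuming monotonic mediator response, a positive average effect of the mediator on the outcome, and a positive ATM, the indirect effect can be negative: there exists a potential-outcomes model (with Ω a finite probability space) in which M₁ ≥ M₀ everywhere, E[Y 1 1 − Y 1 0] ≥ 0, α > 0, and δ(1) < 0. -/
open MeasureTheory

/-- Even assuming monotonic mediator response, a nonnegative average effect of the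
mediator on the outcome, and a positive ATM, the indirect effect can be negative:
there is a finite potential-outcomes model with `M₁ ≥ M₀` everywhere,
`E[Y 1 1 − Y 1 0] ≥ 0`, `α > 0`, and `δ(1) < 0`. -/
theorem exists_mmr_model_pos_mediator_effect_neg_anie :
    ∃ (Ω : Type) (_ : Fintype Ω) (_ : MeasurableSpace Ω) (P : Measure Ω),
      IsProbabilityMeasure P ∧
      ∃ (M : Fin 2 → Ω → Fin 2) (Y : Fin 2 → Fin 2 → Ω → Fin 2),
        (∀ b, Measurable (M b)) ∧ (∀ a m, Measurable (Y a m)) ∧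
        (∀ ω, M 0 ω ≤ M 1 ω) ∧
        0 ≤ ∫ ω, (((Y 1 1 ω : ℕ) : ℝ) - ((Y 1 0 ω : ℕ) : ℝ)) ∂P ∧
        0 < atm P M ∧ anie P M Y 1 < 0 := by
  classical
  refine ⟨Fin 2, inferInstance, ⊤, (PMF.uniformOfFintype (Fin 2)).toMeasure, inferInstance,
    ![fun _ => 0, fun ω => if ω = 0 then 1 else 0],
    fun _ m => fun ω => if m = ω then 1 else 0,
    fun b => measurable_of_finite _, fun a m => measurable_of_finite _,
    fun ω => by fin_cases ω <;> simp, ?_, ?_, ?_⟩ <;>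
  · first | rw [integral_fintype] | rw [atm, integral_fintype] | rw [anie, integral_fintype]
    · norm_num [Fin.sum_univ_two, measureReal_def, PMF.toMeasure_apply_singleton _ _ (MeasurableSet.of_discrete),
        PMF.uniformOfFintype_apply]
    · exact Integrable.of_finite
end

section
/- (Proposition 1, sharpness at level a = 0.) Let q : {0,1} × {0,1} × {0,1} → ℝ satisfy q(y,m,a) ≥ 0 for all y, m, a; Σ_{y,m} q(y,m,a) = 1 for each a ∈ {0,1}; and q(1,1,1) + q(0,1,1) ≥ q(1,1,0) + q(0,1,0). Set α_q = (q(1,1,1) + q(0,1,1)) − (q(1,1,0) + q(0,1,0)). Then for every real d with max{−α_q, −q(1,0,0)} ≤ d ≤ min{α_q, q(0,0,0)} there exists a potential-outcomes model satisfying the monotonic mediator response assumption whose observable probabilities match q (p_{ym·a} = q(y,m,a) for all y, m, a) and whose average natural indirect effect at level 0 equals d: δ(0) = d. -/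
open MeasureTheory

noncomputable def dmeas {n : ℕ} (W : Fin n → ℝ) : Measure (Fin n) :=
  ∑ i, ENNReal.ofReal (W i) • Measure.dirac i

lemma dmeas_apply {n : ℕ} (W : Fin n → ℝ) (S : Set (Fin n)) [DecidablePred (· ∈ S)] :
    (dmeas W) S = ∑ i, if i ∈ S then ENNReal.ofReal (W i) else 0 := by
  rw [dmeas, Measure.finset_sum_apply]
  refine Finset.sum_congr rfl fun i _ => ?_
  rw [Measure.smul_apply, Measure.dirac_apply' i S.toFinite.measurableSet]
  by_cases h : i ∈ S <;> simp [Set.indicator, h]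

lemma dmeas_apply_toReal {n : ℕ} (W : Fin n → ℝ) (hW : ∀ i, 0 ≤ W i) (S : Set (Fin n))
    [DecidablePred (· ∈ S)] :
    ((dmeas W) S).toReal = ∑ i, if i ∈ S then W i else 0 := by
  rw [dmeas_apply, ENNReal.toReal_sum]
  · refine Finset.sum_congr rfl fun i _ => ?_
    by_cases h : i ∈ S <;> simp [h, ENNReal.toReal_ofReal (hW i)]
  · intro i _
    by_cases h : i ∈ S <;> simp [h]

lemma dmeas_singleton {n : ℕ} (W : Fin n → ℝ) (hW : ∀ i, 0 ≤ W i) (x : Fin n) :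
    ((dmeas W) {x}).toReal = W x := by
  classical
  rw [dmeas_apply_toReal W hW]
  simp [Finset.sum_ite_eq']

lemma dmeas_prob {n : ℕ} (W : Fin n → ℝ) (hW : ∀ i, 0 ≤ W i) (h1 : ∑ i, W i = 1) :
    IsProbabilityMeasure (dmeas W) := by
  classical
  constructor
  rw [dmeas_apply]
  simp only [Set.mem_univ, if_true]
  rw [← ENNReal.ofReal_sum_of_nonneg (fun i _ => hW i), h1, ENNReal.ofReal_one]

instance dmeas_finite {n : ℕ} (W : Fin n → ℝ) : IsFiniteMeasure (dmeas W) := by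
  classical
  constructor
  rw [dmeas_apply]
  refine ENNReal.sum_lt_top.2 fun i _ => ?_
  split <;> simp

lemma dmeas_integral {n : ℕ} (W : Fin n → ℝ) (hW : ∀ i, 0 ≤ W i) (f : Fin n → ℝ) :
    ∫ x, f x ∂(dmeas W) = ∑ i, W i * f i := by
  rw [integral_fintype _]
  exact Finset.sum_congr rfl fun i _ => by rw [Measure.real, dmeas_singleton W hW, smul_eq_mul]
  exact .of_finite


/-- Atom weights for the 16-atom construction. -/
noncomputable def Wfun (kA a1 s1 q101 dp dm u v r kC q110 c1 s0 : ℝ) : Fin 16 → ℝ :=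
  ![kA, a1 - kA, q101 - kA, 1 - s1 - a1 - q101 + kA,
    dp*r, dp*(1-r), dm*r, dm*(1-r), u*r, u*(1-r), v*r, v*(1-r),
    kC, q110 - kC, c1 - kC, s0 - q110 - c1 + kC]

/-- Potential mediators on the 16 atoms. -/
def Mfun : Fin 2 → Fin 16 → Fin 2 :=
  ![![0,0,0,0, 0,0,0,0,0,0,0,0, 1,1,1,1],
    ![0,0,0,0, 1,1,1,1,1,1,1,1, 1,1,1,1]]

/-- Potential outcomes on the 16 atoms: `Yfun a m`. -/
def Yfun : Fin 2 → Fin 2 → Fin 16 → Fin 2 :=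
  ![![![1,1,0,0, 0,0,1,1,0,0,1,1, 0,0,0,0],   -- y00
     ![0,0,0,0, 1,1,0,0,0,0,1,1, 1,1,0,0]],  -- y01
   ![![1,0,1,0, 0,0,0,0,0,0,0,0, 0,0,0,0],   -- y10
     ![0,0,0,0, 1,0,1,0,1,0,1,0, 1,0,1,0]]]  -- y11

set_option maxHeartbeats 1000000 in
/-- Proposition 1, sharpness at level `a = 0`: every value `d` in the bounds
`[max{−α_q, −q(1,0,0)}, min{α_q, q(0,0,0)}]` is attained by a potential-outcomes
model satisfying monotonic mediator response whose observable probabilities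
match `q`. -/
theorem prop1_sharp_anie_zero (q : Fin 2 → Fin 2 → Fin 2 → ℝ)
    (hq0 : ∀ y m a, 0 ≤ q y m a)
    (hq1 : ∀ a : Fin 2, ∑ y : Fin 2, ∑ m : Fin 2, q y m a = 1)
    (hqmono : q 1 1 0 + q 0 1 0 ≤ q 1 1 1 + q 0 1 1)
    (d : ℝ)
    (hd1 : max (-((q 1 1 1 + q 0 1 1) - (q 1 1 0 + q 0 1 0))) (-q 1 0 0) ≤ d)
    (hd2 : d ≤ min ((q 1 1 1 + q 0 1 1) - (q 1 1 0 + q 0 1 0)) (q 0 0 0)) :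
    ∃ (Ω : Type) (_ : MeasurableSpace Ω) (P : Measure Ω),
      IsProbabilityMeasure P ∧
      ∃ (M : Fin 2 → Ω → Fin 2) (Y : Fin 2 → Fin 2 → Ω → Fin 2),
        (∀ b, Measurable (M b)) ∧ (∀ a m, Measurable (Y a m)) ∧
        (∀ᵐ ω ∂P, M 0 ω ≤ M 1 ω) ∧
        (∀ y m a : Fin 2, pobs P M Y y m a = q y m a) ∧
        anie P M Y 0 = d := by
  classical
  -- basic facts
  have hs0 : q 0 0 0 + q 0 1 0 + q 1 0 0 + q 1 1 0 = 1 := by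
    have := hq1 0; simp [Fin.sum_univ_two] at this; linarith
  have hs1 : q 0 0 1 + q 0 1 1 + q 1 0 1 + q 1 1 1 = 1 := by
    have := hq1 1; simp [Fin.sum_univ_two] at this; linarith
  set al : ℝ := q 1 1 1 + q 0 1 1 - (q 1 1 0 + q 0 1 0) with hal_def
  have hdal : d ≤ al := le_trans hd2 (min_le_left _ _)
  have hdq : d ≤ q 0 0 0 := le_trans hd2 (min_le_right _ _)
  have hdal' : -al ≤ d := le_trans (le_max_left _ _) hd1
  have hdq' : -q 1 0 0 ≤ d := le_trans (le_max_right _ _) hd1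
  have hal0 : (0:ℝ) ≤ al := by rw [hal_def]; linarith
  set dp : ℝ := max d 0 with hdp_def
  set dm : ℝ := max (-d) 0 with hdm_def
  have hdp0 : 0 ≤ dp := le_max_right _ _
  have hdm0 : 0 ≤ dm := le_max_right _ _
  have hdpal : dp ≤ al := max_le hdal hal0
  have hdmal : dm ≤ al := max_le (by linarith) hal0
  have hdpq : dp ≤ q 0 0 0 := max_le hdq (hq0 0 0 0)
  have hdmq : dm ≤ q 1 0 0 := max_le (by linarith) (hq0 1 0 0)
  have hdpdm : dp + dm ≤ al := by
    rcases le_total 0 d with h | h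
    · rw [hdp_def, hdm_def, max_eq_left h, max_eq_right (by linarith)]; linarith
    · rw [hdp_def, hdm_def, max_eq_right h, max_eq_left (by linarith)]; linarith
  have hdpdmd : dp - dm = d := by
    rcases le_total 0 d with h | h
    · rw [hdp_def, hdm_def, max_eq_left h, max_eq_right (by linarith)]; ring
    · rw [hdp_def, hdm_def, max_eq_right h, max_eq_left (by linarith)]; ring
  set v : ℝ := max 0 (al - dm - q 0 0 0) with hv_def
  have hv0 : 0 ≤ v := le_max_left _ _
  have hvu : v ≤ al - dp - dm := max_le (by linarith) (by linarith)
  have hva : al - dm - q 0 0 0 ≤ v := le_max_right _ _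
  have hva1 : v ≤ q 1 0 0 - dm := by
    refine max_le (by linarith) ?_
    have : al ≤ q 0 0 0 + q 1 0 0 := by
      rw [hal_def]; nlinarith [hq0 0 0 1, hq0 1 0 1]
    linarith
  set u : ℝ := al - dp - dm - v with hu_def
  have hu0 : 0 ≤ u := by rw [hu_def]; linarith
  set a1 : ℝ := q 1 0 0 - dm - v with ha1_def
  have ha10 : 0 ≤ a1 := by rw [ha1_def]; linarith
  set c1 : ℝ := min (q 1 1 1) (q 1 1 0 + q 0 1 0) with hc1_def
  have hc10 : 0 ≤ c1 := le_min (hq0 1 1 1) (by linarith [hq0 1 1 0, hq0 0 1 0])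
  set b1 : ℝ := q 1 1 1 - c1 with hb1_def
  have hb10 : 0 ≤ b1 := by rw [hb1_def, hc1_def]; linarith [min_le_left (q 1 1 1) (q 1 1 0 + q 0 1 0)]
  have hb1al : b1 ≤ al := by
    rw [hb1_def, hal_def]
    rcases min_cases (q 1 1 1) (q 1 1 0 + q 0 1 0) with ⟨h, _⟩ | ⟨h, _⟩ <;>
      rw [hc1_def, h] <;> linarith [hq0 0 1 1]
  set r : ℝ := b1 / al with hr_def
  have hr0 : 0 ≤ r := div_nonneg hb10 hal0
  have hr1 : r ≤ 1 := by
    rcases eq_or_lt_of_le hal0 with h | h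
    · rw [hr_def, ← h, div_zero]; norm_num
    · exact (div_le_one h).2 hb1al
  have har : al * r = b1 := by
    rcases eq_or_lt_of_le hal0 with h | h
    · rw [← h, zero_mul]; linarith
    · rw [hr_def]; field_simp
  set kA : ℝ := min a1 (q 1 0 1) with hkA_def
  have hkA0 : 0 ≤ kA := le_min ha10 (hq0 1 0 1)
  have hkA1 : kA ≤ a1 := min_le_left _ _
  have hkA2 : kA ≤ q 1 0 1 := min_le_right _ _
  set kC : ℝ := min (q 1 1 0) c1 with hkC_def
  have hkC0 : 0 ≤ kC := le_min (hq0 1 1 0) hc10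
  have hkC1 : kC ≤ q 1 1 0 := min_le_left _ _
  have hkC2 : kC ≤ c1 := min_le_right _ _
  set W : Fin 16 → ℝ :=
    Wfun kA a1 (q 1 1 1 + q 0 1 1) (q 1 0 1) dp dm u v r kC (q 1 1 0) c1
      (q 1 1 0 + q 0 1 0) with hW_def
  have hW4 : 0 ≤ 1 - (q 1 1 1 + q 0 1 1) - a1 - q 1 0 1 + kA := by
    rcases min_cases a1 (q 1 0 1) with ⟨h, _⟩ | ⟨h, h'⟩ <;> rw [hkA_def, h]
    · linarith [hq0 0 0 1]
    · rw [ha1_def, hal_def] at *; linarith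
  have hW16 : 0 ≤ (q 1 1 0 + q 0 1 0) - q 1 1 0 - c1 + kC := by
    rcases min_cases (q 1 1 0) c1 with ⟨h, _⟩ | ⟨h, h'⟩ <;> rw [hkC_def, h]
    · rw [hc1_def]; linarith [min_le_right (q 1 1 1) (q 1 1 0 + q 0 1 0)]
    · linarith [hq0 0 1 0]
  have hWnn : ∀ i, 0 ≤ W i := by
    simp only [hW_def, Wfun, Fin.forall_fin_succ, Matrix.cons_val_zero, Matrix.cons_val_succ,
      IsEmpty.forall_iff, and_true]
    refine ⟨?_, ?_, ?_, ?_, ?_, ?_, ?_, ?_, ?_, ?_, ?_, ?_, ?_, ?_, ?_, ?_⟩ <;>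
      first
        | positivity
        | linarith [mul_nonneg hdp0 hr0, mul_nonneg hdm0 hr0, mul_nonneg hu0 hr0,
            mul_nonneg hv0 hr0, mul_nonneg hdp0 (by linarith : (0:ℝ) ≤ 1 - r),
            mul_nonneg hdm0 (by linarith : (0:ℝ) ≤ 1 - r),
            mul_nonneg hu0 (by linarith : (0:ℝ) ≤ 1 - r),
            mul_nonneg hv0 (by linarith : (0:ℝ) ≤ 1 - r)]
  have hWsum : ∑ i, W i = 1 := by
    rw [hW_def]
    simp only [Wfun, Fin.sum_univ_succ, Matrix.cons_val_zero, Matrix.cons_val_succ,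
      Finset.univ_eq_empty, Finset.sum_empty]
    rw [hu_def, ha1_def, hal_def]
    ring
  refine ⟨Fin 16, inferInstance, dmeas W, dmeas_prob W hWnn hWsum, Mfun, Yfun,
    fun b => measurable_of_countable _, fun a m => measurable_of_countable _,
    Filter.Eventually.of_forall (by decide), ?_, ?_⟩
  · -- observable probabilities
    have hBsum : dp + dm + u + v = al := by rw [hu_def]; ring
    have hBr : dp * r + dm * r + u * r + v * r = b1 := by
      calc dp * r + dm * r + u * r + v * r = (dp + dm + u + v) * r := by ring
        _ = al * r := by rw [hBsum]
        _ = b1 := har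
    intro y m a
    fin_cases y <;> fin_cases m <;> fin_cases a <;>
      · rw [pobs, dmeas_apply_toReal W hWnn]
        simp only [hW_def, Wfun, Mfun, Yfun, Set.mem_setOf_eq, Fin.sum_univ_succ,
          Matrix.cons_val_zero, Matrix.cons_val_one, Matrix.head_cons, Matrix.cons_val_succ,
          Finset.univ_eq_empty, Finset.sum_empty, Fin.isValue, Fin.mk_zero, Fin.mk_one,
          (by decide : (1 : Fin 2) ≠ 0), (by decide : (0 : Fin 2) ≠ 1),
          eq_self_iff_true, and_self, and_true, true_and, and_false, false_and,
          if_true, if_false, add_zero, zero_add]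
        linarith [hBr, hBsum, hb1_def, hal_def, ha1_def, hu_def, hs0, hs1]
  · -- ANIE
    rw [anie, dmeas_integral W hWnn]
    simp only [hW_def, Wfun, Mfun, Yfun, Fin.sum_univ_succ, Matrix.cons_val_zero,
      Matrix.cons_val_one, Matrix.head_cons, Matrix.cons_val_succ,
      Finset.univ_eq_empty, Finset.sum_empty, Fin.isValue, Fin.val_zero, Fin.val_one,
      Nat.cast_zero, Nat.cast_one]
    ring_nf
    linarith [hdpdmd]
end

section
/- (Proposition 1, sharpness at level a = 1.) Let q : {0,1} × {0,1} × {0,1} → ℝ satisfy q(y,m,a) ≥ 0 for all y, m, a; Σ_{y,m} q(y,m,a) = 1 for each a ∈ {0,1}; and q(1,1,1) + q(0,1,1) ≥ q(1,1,0) + q(0,1,0). Set α_q = (q(1,1,1) + q(0,1,1)) − (q(1,1,0) + q(0,1,0)). Then for every real d with max{−α_q, −q(0,1,1)} ≤ d ≤ min{α_q, q(1,1,1)} there exists a potential-outcomes model satisfying the monotonic mediator response assumption whose observable probabilities match q (p_{ym·a} = q(y,m,a) for all y, m, a) and whose average natural indirect effect at level 1 equals d: δ(1) = d. -/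
open MeasureTheory

/-! Auxiliary construction: sample space, response functions, and weights. -/

/-- Sample space: 8 response types × two Bernoulli coordinates for the arm-0 outcomes. -/
abbrev MedOm : Type := Fin 8 × Fin 2 × Fin 2

def med_m0 : Fin 8 → Fin 2 := ![0,0,0,0,1,1,0,0]
def med_m1 : Fin 8 → Fin 2 := ![1,1,1,1,1,1,0,0]
def med_y11 : Fin 8 → Fin 2 := ![1,0,1,0,1,0,0,0]
def med_y10 : Fin 8 → Fin 2 := ![0,1,1,0,0,0,1,0]

/-- Potential mediators. -/
def medM : Fin 2 → MedOm → Fin 2 := fun b ω => if b = 0 then med_m0 ω.1 else med_m1 ω.1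

/-- Potential outcomes. -/
def medY : Fin 2 → Fin 2 → MedOm → Fin 2 := fun a m ω =>
  if a = 0 then (if m = 0 then ω.2.1 else ω.2.2) else (if m = 0 then med_y10 ω.1 else med_y11 ω.1)

/-- Weight function. -/
def medW (av : Fin 8 → ℝ) (b0 b1 : ℝ) : MedOm → ℝ := fun ω =>
  av ω.1 * (if ω.2.1 = 1 then b0 else 1 - b0) * (if ω.2.2 = 1 then b1 else 1 - b1)

set_option maxHeartbeats 2000000 in
/-- Proposition 1, sharpness at level `a = 1`: every value `d` in the bounds
`[max{−α_q, −q(0,1,1)}, min{α_q, q(1,1,1)}]` is attained by a potential-outcomes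
model satisfying monotonic mediator response whose observable probabilities
match `q`. -/
theorem prop1_sharp_anie_one (q : Fin 2 → Fin 2 → Fin 2 → ℝ)
    (hq0 : ∀ y m a, 0 ≤ q y m a)
    (hq1 : ∀ a : Fin 2, ∑ y : Fin 2, ∑ m : Fin 2, q y m a = 1)
    (hqmono : q 1 1 0 + q 0 1 0 ≤ q 1 1 1 + q 0 1 1)
    (d : ℝ)
    (hd1 : max (-((q 1 1 1 + q 0 1 1) - (q 1 1 0 + q 0 1 0))) (-q 0 1 1) ≤ d)
    (hd2 : d ≤ min ((q 1 1 1 + q 0 1 1) - (q 1 1 0 + q 0 1 0)) (q 1 1 1)) :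
    ∃ (Ω : Type) (_ : MeasurableSpace Ω) (P : Measure Ω),
      IsProbabilityMeasure P ∧
      ∃ (M : Fin 2 → Ω → Fin 2) (Y : Fin 2 → Fin 2 → Ω → Fin 2),
        (∀ b, Measurable (M b)) ∧ (∀ a m, Measurable (Y a m)) ∧
        (∀ᵐ ω ∂P, M 0 ω ≤ M 1 ω) ∧
        (∀ y m a : Fin 2, pobs P M Y y m a = q y m a) ∧
        anie P M Y 1 = d := by
  -- basic facts from hypotheses
  have h1sum : q 0 0 1 + q 0 1 1 + (q 1 0 1 + q 1 1 1) = 1 := by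
    simpa [Fin.sum_univ_two] using hq1 1
  have h0sum : q 0 0 0 + q 0 1 0 + (q 1 0 0 + q 1 1 0) = 1 := by
    simpa [Fin.sum_univ_two] using hq1 0
  have hdA : -((q 1 1 1 + q 0 1 1) - (q 1 1 0 + q 0 1 0)) ≤ d := le_trans (le_max_left _ _) hd1
  have hdB : -q 0 1 1 ≤ d := le_trans (le_max_right _ _) hd1
  have hdC : d ≤ (q 1 1 1 + q 0 1 1) - (q 1 1 0 + q 0 1 0) := le_trans hd2 (min_le_left _ _)
  have hdD : d ≤ q 1 1 1 := le_trans hd2 (min_le_right _ _)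
  -- the real parameters
  set dp : ℝ := max d 0 with hdp_def
  set dm : ℝ := max (-d) 0 with hdm_def
  set r0 : ℝ := q 1 1 0 + q 0 1 0 with hr0_def
  set e1 : ℝ := min r0 (q 1 1 1 - dp) with he1_def
  set e0 : ℝ := r0 - e1 with he0_def
  set c1 : ℝ := q 1 1 1 - dp - e1 with hc1_def
  set c0 : ℝ := q 0 1 1 - dm - e0 with hc0_def
  set b0 : ℝ := q 1 0 0 / (q 1 0 0 + q 0 0 0) with hb0_def
  set b1 : ℝ := q 1 1 0 / r0 with hb1_def
  have hdp0 : 0 ≤ dp := le_max_right _ _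
  have hdm0 : 0 ≤ dm := le_max_right _ _
  have hdpq : dp ≤ q 1 1 1 := max_le hdD (hq0 1 1 1)
  have hdmq : dm ≤ q 0 1 1 := max_le (by linarith) (hq0 0 1 1)
  have hr00 : 0 ≤ r0 := by have := hq0 1 1 0; have := hq0 0 1 0; rw [hr0_def]; linarith
  have hdpm : dp - dm = d := by
    rcases le_total 0 d with h | h
    · rw [hdp_def, hdm_def, max_eq_left h, max_eq_right (by linarith)]; ring
    · rw [hdp_def, hdm_def, max_eq_right h, max_eq_left (by linarith)]; ring
  have hdpdm : dp + dm ≤ q 1 1 1 + q 0 1 1 - r0 := by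
    rcases le_total 0 d with h | h
    · rw [hdp_def, hdm_def, max_eq_left h, max_eq_right (by linarith), hr0_def]; linarith
    · rw [hdp_def, hdm_def, max_eq_right h, max_eq_left (by linarith), hr0_def]; linarith
  have he10 : 0 ≤ e1 := le_min hr00 (by linarith)
  have he00 : 0 ≤ e0 := by rw [he0_def]; have := min_le_left r0 (q 1 1 1 - dp); linarith
  have hc10 : 0 ≤ c1 := by
    rw [hc1_def]; have := min_le_right r0 (q 1 1 1 - dp); linarith
  have hc00 : 0 ≤ c0 := by
    rw [hc0_def, he0_def]
    rcases le_total r0 (q 1 1 1 - dp) with h | h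
    · rw [he1_def, min_eq_left h]; linarith
    · rw [he1_def, min_eq_right h]; linarith
  -- Bernoulli parameter bounds
  have hb00 : 0 ≤ b0 := div_nonneg (hq0 1 0 0) (by have := hq0 1 0 0; have := hq0 0 0 0; linarith)
  have hb01 : b0 ≤ 1 := by
    rcases eq_or_lt_of_le (by have := hq0 1 0 0; have := hq0 0 0 0; linarith :
        (0:ℝ) ≤ q 1 0 0 + q 0 0 0) with h | h
    · rw [hb0_def, ← h, div_zero]; norm_num
    · rw [hb0_def, div_le_one h]; have := hq0 0 0 0; linarith
  have hb10 : 0 ≤ b1 := div_nonneg (hq0 1 1 0) hr00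
  have hb11 : b1 ≤ 1 := by
    rcases eq_or_lt_of_le hr00 with h | h
    · rw [hb1_def, ← h, div_zero]; norm_num
    · rw [hb1_def, div_le_one h, hr0_def]; have := hq0 0 1 0; linarith
  -- key product identities
  have hB1 : r0 * b1 = q 1 1 0 := by
    rcases eq_or_lt_of_le hr00 with h | h
    · have h110 : q 1 1 0 = 0 := by
        have := hq0 1 1 0; have := hq0 0 1 0; rw [hr0_def] at h; linarith
      rw [← h, zero_mul, h110]
    · rw [hb1_def]; field_simp
  have hB0 : (q 1 0 0 + q 0 0 0) * b0 = q 1 0 0 := by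
    rcases eq_or_lt_of_le (by have := hq0 1 0 0; have := hq0 0 0 0; linarith :
        (0:ℝ) ≤ q 1 0 0 + q 0 0 0) with h | h
    · have h100 : q 1 0 0 = 0 := by have := hq0 1 0 0; have := hq0 0 0 0; linarith
      rw [← h, zero_mul, h100]
    · rw [hb0_def]; field_simp
  have hS : dp + dm + c1 + c0 + q 1 0 1 + q 0 0 1 = q 1 0 0 + q 0 0 0 := by
    rw [hc1_def, hc0_def, he0_def, hr0_def]; linarith
  -- the atom masses and weights
  set av : Fin 8 → ℝ := ![dp, dm, c1, c0, e1, e0, q 1 0 1, q 0 0 1] with hav_def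
  set wr : MedOm → ℝ := medW av b0 b1 with hwr_def
  have hav0 : ∀ t, 0 ≤ av t := by
    intro t
    fin_cases t <;>
      simp only [hav_def, Matrix.cons_val_zero, Matrix.cons_val_one, Matrix.head_cons,
        Matrix.cons_val_succ, Fin.mk_one, Fin.isValue] <;>
      first
        | exact hdp0 | exact hdm0 | exact hc10 | exact hc00 | exact he10 | exact he00
        | exact hq0 1 0 1 | exact hq0 0 0 1
  have hwr0 : ∀ ω, 0 ≤ wr ω := by
    intro ω
    rw [hwr_def]
    refine mul_nonneg (mul_nonneg (hav0 ω.1) ?_) ?_ <;> split <;> linarith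
  have hwrsum : ∑ ω : MedOm, wr ω = 1 := by
    rw [hwr_def]
    simp only [medW, hav_def, Fintype.sum_prod_type, Fin.sum_univ_succ, Fin.sum_univ_zero,
      Matrix.cons_val_zero, Matrix.cons_val_one, Matrix.head_cons, Matrix.cons_val_succ]
    norm_num
    linear_combination hc1_def + hc0_def + h1sum
  -- the measure
  set f : MedOm → ENNReal := fun ω => ENNReal.ofReal (wr ω) with hf_def
  have hf1 : ∑ ω : MedOm, f ω = 1 := by
    rw [hf_def]
    rw [← ENNReal.ofReal_sum_of_nonneg (fun i _ => hwr0 i), hwrsum, ENNReal.ofReal_one]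
  set p : PMF MedOm := PMF.ofFintype f hf1 with hp_def
  set P : Measure MedOm := p.toMeasure with hP_def
  have hkey : ∀ S : Set MedOm, (P S).toReal = ∑ x : MedOm, S.indicator wr x := by
    intro S
    rw [hP_def, PMF.toMeasure_apply_fintype]
    rw [ENNReal.toReal_sum (fun a _ => ?_)]
    · refine Finset.sum_congr rfl fun x _ => ?_
      by_cases hx : x ∈ S
      · simp [Set.indicator_apply, hx, hp_def, PMF.ofFintype_apply, hf_def,
          ENNReal.toReal_ofReal (hwr0 x)]
      · simp [Set.indicator_apply, hx]
    · by_cases hx : a ∈ S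
      · simp [Set.indicator_apply, hx, hp_def, PMF.ofFintype_apply, hf_def]
      · simp [Set.indicator_apply, hx]
  have hpt : ∀ x : MedOm, (p x).toReal = wr x := by
    intro x
    rw [hp_def, PMF.ofFintype_apply, hf_def, ENNReal.toReal_ofReal (hwr0 x)]
  refine ⟨MedOm, inferInstance, P, by rw [hP_def]; infer_instance, medM, medY,
    fun b => measurable_of_countable _, fun a m => measurable_of_countable _, ?_, ?_, ?_⟩
  · refine Filter.Eventually.of_forall fun ω => ?_
    obtain ⟨t, u⟩ := ω
    fin_cases t <;> simp [medM, med_m0, med_m1] <;> decide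
  · have expand : ∀ y m a : Fin 2, pobs P medM medY y m a =
        ∑ x : MedOm, {ω : MedOm | medY a (medM a ω) ω = y ∧ medM a ω = m}.indicator wr x :=
      fun y m a => hkey _
    intro y m a
    fin_cases y <;> fin_cases m <;> fin_cases a <;>
      rw [expand] <;>
      simp (config := { decide := true }) only [Set.indicator_apply, Set.mem_setOf_eq,
        medM, medY, med_m0, med_m1,
        med_y10, med_y11, hwr_def, medW, hav_def, Fintype.sum_prod_type, Fin.sum_univ_succ,
        Fin.sum_univ_zero, Matrix.cons_val_zero, Matrix.cons_val_one, Matrix.head_cons,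
        Matrix.cons_val_succ, if_true, if_false, Fin.mk_zero, Fin.mk_one]
    · linear_combination (1 - b0) * hS - hB0
    · ring
    · linear_combination (1 - b1) * he0_def + hr0_def - hB1
    · linear_combination hc0_def
    · linear_combination hB0 + b0 * hS
    · ring
    · linear_combination hB1 + b1 * he0_def
    · linear_combination hc1_def
  · rw [anie, hP_def, PMF.integral_eq_sum]
    simp only [smul_eq_mul]
    rw [Finset.sum_congr rfl fun x _ => by rw [hpt x]]
    simp only [medM, medY, med_m0, med_m1, med_y10, med_y11, hwr_def, medW, hav_def,
      Fintype.sum_prod_type, Fin.sum_univ_succ, Fin.sum_univ_zero, Matrix.cons_val_zero,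
      Matrix.cons_val_one, Matrix.head_cons, Matrix.cons_val_succ]
    norm_num
    linear_combination hdpm
end
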